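/- arXiv:1004.2978 — 4 statements merged into one kernel-verified Lean document; each statement's English description precedes it below -/
import Mathlib

section
/- Assume N₊ ≥ 1 and N₋ ≥ 1. Then (i) an element ω ∈ Ω satisfies dω = 0 if and only if ω ∼ a₀₀ + ψ₁a₁₀ + χ₁a₀₁ + ψ₁χ₁a₁₁ for some polynomials a₀₀, a₁₀, a₀₁, a₁₁ lying in the subring ℂ[ψ₂,…,ψ_{N₊}, χ₂,…,χ_{N₋}] of R (complex constants when N₊ = N₋ = 1); and (ii) a₀₀ + ψ₁a₁₀ + χ₁a₀₁ + ψ₁χ₁a₁₁ ∼ 0 for such coefficients if and only if a₀₀ = a₁₀ = a₀₁ = a₁₁ = 0. -/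
/-!
D = 2, signature (1,1) supersymmetry algebra cohomology.
`R2 Np Nm = ℂ[ψ₁,…,ψ_{N₊}, χ₁,…,χ_{N₋}]`, `Om2` is the free module with basis
`{1, c̃₁, c̃₂, c̃₁c̃₂}`, and `d2` is the differential with `dc̃₁ = P`, `dc̃₂ = Q`.
-/

open MvPolynomial

noncomputable section

/-- The polynomial ring `ℂ[ψ₁,…,ψ_{N₊}, χ₁,…,χ_{N₋}]`; `Sum.inl i ↦ ψᵢ`, `Sum.inr i ↦ χᵢ`. -/
abbrev R2 (Np Nm : ℕ) : Type := MvPolynomial (Fin Np ⊕ Fin Nm) ℂ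

/-- `Ω`: free `R2`-module with basis `{1, c̃₁, c̃₂, c̃₁c̃₂}` (components 0,1,2,3). -/
abbrev Om2 (Np Nm : ℕ) : Type := Fin 4 → R2 Np Nm

/-- The ghost `ψᵢ`. -/
def ψ {Np Nm : ℕ} (i : Fin Np) : R2 Np Nm := X (Sum.inl i)

/-- The ghost `χᵢ`. -/
def χ {Np Nm : ℕ} (i : Fin Nm) : R2 Np Nm := X (Sum.inr i)

/-- `P = Σ ψᵢ²`. -/
def Pp (Np Nm : ℕ) : R2 Np Nm := ∑ i, ψ i ^ 2

/-- `Q = Σ χᵢ²`. -/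
def Qq (Np Nm : ℕ) : R2 Np Nm := ∑ i, χ i ^ 2

/-- The differential `d(ω₀ + c̃₁ω₁ + c̃₂ω₂ + c̃₁c̃₂ω₃) = Pω₁ + Qω₂ + (Pc̃₂ − Qc̃₁)ω₃`. -/
def d2 {Np Nm : ℕ} (ω : Om2 Np Nm) : Om2 Np Nm :=
  ![Pp Np Nm * ω 1 + Qq Np Nm * ω 2, -(Qq Np Nm * ω 3), Pp Np Nm * ω 3, 0]

/-- Embedding of `R` into `Ω` (coefficient of the basis element `1`). -/
def ofR {Np Nm : ℕ} (r : R2 Np Nm) : Om2 Np Nm := ![r, 0, 0, 0]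

/-- `ω ∼ ω'` iff `ω − ω' = dρ` for some `ρ`. -/
def Equiv2 {Np Nm : ℕ} (ω ω' : Om2 Np Nm) : Prop := ∃ ρ, ω - ω' = d2 ρ

/-- The subring `ℂ[ψ₂,…,ψ_{N₊}, χ₂,…,χ_{N₋}]` of `R2 Np Nm`. -/
def coefRing (Np Nm : ℕ) (hp : 0 < Np) (hm : 0 < Nm) : Subalgebra ℂ (R2 Np Nm) :=
  MvPolynomial.supported ℂ
    {v : Fin Np ⊕ Fin Nm | v ≠ Sum.inl ⟨0, hp⟩ ∧ v ≠ Sum.inr ⟨0, hm⟩}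

/-!
Write `A = ℂ[ψ₂,…,ψ_{N₊}, χ₂,…,χ_{N₋}]`, so that `R = A[ψ₁][χ₁]`, `P = ψ₁² + p` and
`Q = χ₁² + q` with `p, q ∈ A`. Dividing by `Q`, which is monic in `χ₁`, and then by `P`, which
is monic in `ψ₁`, shows that `R/(P, Q)` is a free `A`-module on `1, ψ₁, χ₁, ψ₁χ₁`: this is (ii)
and reduces the `1`-component of a cocycle to that normal form. The other components of a
cocycle are exact because `P` is a nonzerodivisor modulo the monic `Q`: `Pu + Qv = 0` forces
`u = Qs` and `v = -Ps`.
-/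

namespace Polynomial

section Monic

variable {E : Type*} [CommRing E] {m : E[X]}

theorem Monic.exists_eq_C_add_C_mul_X_add_mul [Nontrivial E] (hm : m.Monic)
    (hdeg : m.natDegree = 2) (w : E[X]) : ∃ a b d, w = C a + C b * X + m * d := by
  have hr : (w %ₘ m).degree ≤ 1 := by
    have := degree_modByMonic_lt w hm
    rw [degree_eq_natDegree hm.ne_zero, hdeg] at this
    exact Order.le_of_lt_succ this
  refine ⟨(w %ₘ m).coeff 0, (w %ₘ m).coeff 1, w /ₘ m, ?_⟩
  rw [add_comm (C _), ← eq_X_add_C_of_degree_le_one hr, modByMonic_add_div]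

theorem Monic.eq_zero_of_C_add_C_mul_X_eq_mul [Nontrivial E] (hm : m.Monic)
    (hdeg : m.natDegree = 2) {a b : E} {d : E[X]} (h : C a + C b * X = m * d) :
    a = 0 ∧ b = 0 := by
  have hlin : C b * X + C a = 0 := by
    by_contra hne
    refine hm.not_dvd_of_degree_lt hne ?_ ⟨d, by rw [add_comm, h]⟩
    rw [degree_eq_natDegree hm.ne_zero, hdeg]
    exact degree_linear_le.trans_lt (by norm_num)
  exact ⟨by simpa using congrArg (coeff · 0) hlin, by simpa using congrArg (coeff · 1) hlin⟩

theorem Monic.dvd_of_dvd_C_mul [IsDomain E] (hm : m.Monic) {c : E} (hc : c ≠ 0) {u : E[X]}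
    (h : m ∣ C c * u) : m ∣ u := by
  rw [← modByMonic_eq_zero_iff_dvd hm]
  have hdvd : m ∣ C c * (u %ₘ m) := by
    obtain ⟨w, hw⟩ := h
    exact ⟨w - C c * (u /ₘ m), by linear_combination C c * modByMonic_add_div u m + hw⟩
  have hlt : (C c * (u %ₘ m)).degree < m.degree :=
    (degree_C_mul hc).trans_lt (degree_modByMonic_lt u hm)
  by_contra hne
  exact hm.not_dvd_of_degree_lt (mul_ne_zero (C_ne_zero.2 hc) hne) hlt hdvd

end Monic

section TwoSquares

variable {D : Type*} [CommRing D]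

def reducedForm (a₀₀ a₁₀ a₀₁ a₁₁ : D) : D[X][X] :=
  C (C a₀₀) + C X * C (C a₁₀) + X * C (C a₀₁) + C X * X * C (C a₁₁)

variable (p q : D)

theorem exists_eq_reducedForm_add [Nontrivial D] (r : D[X][X]) :
    ∃ (a₀₀ a₁₀ a₀₁ a₁₁ : D) (u v : D[X][X]),
      r = reducedForm a₀₀ a₁₀ a₀₁ a₁₁ + C (X ^ 2 + C p) * u + (X ^ 2 + C (C q)) * v := by
  have hP := monic_X_pow_add_C p two_ne_zero
  have hQ := monic_X_pow_add_C (C q) two_ne_zero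
  obtain ⟨w₀, w₁, v, hr⟩ := hQ.exists_eq_C_add_C_mul_X_add_mul natDegree_X_pow_add_C r
  obtain ⟨a₀₀, a₁₀, d₀, hw₀⟩ := hP.exists_eq_C_add_C_mul_X_add_mul natDegree_X_pow_add_C w₀
  obtain ⟨a₀₁, a₁₁, d₁, hw₁⟩ := hP.exists_eq_C_add_C_mul_X_add_mul natDegree_X_pow_add_C w₁
  refine ⟨a₀₀, a₁₀, a₀₁, a₁₁, C d₀ + C d₁ * X, v, ?_⟩
  rw [hr, hw₀, hw₁, reducedForm]
  simp only [map_add, map_mul]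
  ring

theorem eq_zero_of_reducedForm_eq_mul_add_mul [Nontrivial D] {a₀₀ a₁₀ a₀₁ a₁₁ : D}
    {u v : D[X][X]}
    (h : reducedForm a₀₀ a₁₀ a₀₁ a₁₁ = C (X ^ 2 + C p) * u + (X ^ 2 + C (C q)) * v) :
    a₀₀ = 0 ∧ a₁₀ = 0 ∧ a₀₁ = 0 ∧ a₁₁ = 0 := by
  have hP := monic_X_pow_add_C p two_ne_zero
  have hQ := monic_X_pow_add_C (C q) two_ne_zero
  obtain ⟨u₀, u₁, u', hu⟩ := hQ.exists_eq_C_add_C_mul_X_add_mul natDegree_X_pow_add_C u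
  obtain ⟨h₀, h₁⟩ := hQ.eq_zero_of_C_add_C_mul_X_eq_mul natDegree_X_pow_add_C
    (a := C a₀₀ + C a₁₀ * X - (X ^ 2 + C p) * u₀) (b := C a₀₁ + C a₁₁ * X - (X ^ 2 + C p) * u₁)
    (d := v + C (X ^ 2 + C p) * u') (by
      rw [reducedForm, hu] at h
      simp only [map_add, map_sub, map_mul] at h ⊢
      linear_combination h)
  obtain ⟨rfl, rfl⟩ := hP.eq_zero_of_C_add_C_mul_X_eq_mul natDegree_X_pow_add_C
    (a := a₀₀) (b := a₁₀) (d := u₀) (by linear_combination h₀)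
  obtain ⟨rfl, rfl⟩ := hP.eq_zero_of_C_add_C_mul_X_eq_mul natDegree_X_pow_add_C
    (a := a₀₁) (b := a₁₁) (d := u₁) (by linear_combination h₁)
  exact ⟨rfl, rfl, rfl, rfl⟩

theorem exists_eq_mul_of_mul_add_mul_eq_zero [IsDomain D] {u v : D[X][X]}
    (h : C (X ^ 2 + C p) * u + (X ^ 2 + C (C q)) * v = 0) :
    ∃ s, u = (X ^ 2 + C (C q)) * s ∧ v = -(C (X ^ 2 + C p) * s) := by
  have hP := monic_X_pow_add_C p two_ne_zero
  have hQ := monic_X_pow_add_C (C q) two_ne_zero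
  obtain ⟨s, rfl⟩ := hQ.dvd_of_dvd_C_mul hP.ne_zero (u := u) ⟨-v, by linear_combination h⟩
  refine ⟨s, rfl, ?_⟩
  have : (X ^ 2 + C (C q)) * (v + C (X ^ 2 + C p) * s) = 0 := by linear_combination h
  linear_combination (mul_eq_zero.1 this).resolve_left hQ.ne_zero

end TwoSquares

end Polynomial

theorem MvPolynomial.supported_range_eq_range_rename {σ τ R : Type*} [CommSemiring R]
    {f : τ → σ} (hf : f.Injective) : supported R (Set.range f) = (rename (R := R) f).range := by
  classical
  ext p
  rw [mem_supported, AlgHom.mem_range]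
  constructor
  · exact exists_rename_eq_of_vars_subset_range p f hf
  · rintro ⟨q, rfl⟩ v hv
    obtain ⟨w, -, rfl⟩ := Finset.mem_image.1 (vars_rename f q hv)
    exact ⟨w, rfl⟩

section SplitGhosts

open scoped Polynomial

variable (a b : ℕ)

def splitGhostsIndex : (Fin (a + 1) ⊕ Fin (b + 1)) ≃ Option (Option (Fin a ⊕ Fin b)) where
  toFun := Sum.elim (Fin.cases (some none) fun i ↦ some (some (Sum.inl i)))
    (Fin.cases none fun j ↦ some (some (Sum.inr j)))
  invFun
    | none => Sum.inr 0
    | some none => Sum.inl 0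
    | some (some (Sum.inl i)) => Sum.inl i.succ
    | some (some (Sum.inr j)) => Sum.inr j.succ
  left_inv := by
    rintro (i | j) <;> [induction i using Fin.cases; induction j using Fin.cases] <;> simp
  right_inv := by rintro (_ | _ | i | j) <;> simp

def splitGhosts : R2 (a + 1) (b + 1) ≃ₐ[ℂ] (R2 a b)[X][X] :=
  (renameEquiv ℂ (splitGhostsIndex a b)).trans
    ((optionEquivLeft ℂ _).trans (Polynomial.mapAlgEquiv (optionEquivLeft ℂ _)))

abbrev restGhosts : R2 a b →ₐ[ℂ] R2 (a + 1) (b + 1) := rename (Sum.map Fin.succ Fin.succ)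

variable {a b}

theorem splitGhosts_ψ_zero : splitGhosts a b (ψ 0) = Polynomial.C Polynomial.X := by
  simp [splitGhosts, ψ, splitGhostsIndex, optionEquivLeft_X_some, optionEquivLeft_X_none,
    Polynomial.coe_mapAlgEquiv]

theorem splitGhosts_χ_zero : splitGhosts a b (χ 0) = Polynomial.X := by
  simp [splitGhosts, χ, splitGhostsIndex, optionEquivLeft_X_none, Polynomial.coe_mapAlgEquiv]

theorem splitGhosts_restGhosts (y : R2 a b) :
    splitGhosts a b (restGhosts a b y) = Polynomial.C (Polynomial.C y) := by
  have : (splitGhosts a b).toAlgHom.comp (restGhosts a b) =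
      (Polynomial.CAlgHom.comp Polynomial.CAlgHom : R2 a b →ₐ[ℂ] _) := by
    apply MvPolynomial.algHom_ext
    rintro (i | j) <;> simp [splitGhosts, splitGhostsIndex, optionEquivLeft_X_some,
      Polynomial.coe_mapAlgEquiv, Polynomial.CAlgHom]
  exact DFunLike.congr_fun this y

theorem Pp_succ : Pp (a + 1) (b + 1) = ψ 0 ^ 2 + restGhosts a b (Pp a b) := by
  simp [Pp, ψ, Fin.sum_univ_succ]

theorem Qq_succ : Qq (a + 1) (b + 1) = χ 0 ^ 2 + restGhosts a b (Qq a b) := by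
  simp [Qq, χ, Fin.sum_univ_succ]

theorem splitGhosts_Pp :
    splitGhosts a b (Pp (a + 1) (b + 1)) =
      Polynomial.C (Polynomial.X ^ 2 + Polynomial.C (Pp a b)) := by
  simp [Pp_succ, splitGhosts_ψ_zero, splitGhosts_restGhosts]

theorem splitGhosts_Qq :
    splitGhosts a b (Qq (a + 1) (b + 1)) =
      Polynomial.X ^ 2 + Polynomial.C (Polynomial.C (Qq a b)) := by
  simp [Qq_succ, splitGhosts_χ_zero, splitGhosts_restGhosts]

theorem splitGhosts_reducedForm (hp : 0 < a + 1) (hm : 0 < b + 1) (y₀₀ y₁₀ y₀₁ y₁₁ : R2 a b) :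
    splitGhosts a b (restGhosts a b y₀₀ + ψ ⟨0, hp⟩ * restGhosts a b y₁₀
      + χ ⟨0, hm⟩ * restGhosts a b y₀₁ + ψ ⟨0, hp⟩ * χ ⟨0, hm⟩ * restGhosts a b y₁₁) =
      Polynomial.reducedForm y₀₀ y₁₀ y₀₁ y₁₁ := by
  simp only [map_add, map_mul, Fin.mk_zero', splitGhosts_ψ_zero, splitGhosts_χ_zero,
    splitGhosts_restGhosts, Polynomial.reducedForm]

theorem coefRing_succ (hp : 0 < a + 1) (hm : 0 < b + 1) :
    coefRing (a + 1) (b + 1) hp hm = (restGhosts a b).range := by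
  rw [restGhosts, ← supported_range_eq_range_rename
    ((Fin.succ_injective a).sumMap (Fin.succ_injective b)), coefRing]
  congr 1
  ext (i | j) <;> simp [Fin.exists_succ_eq]

end SplitGhosts

section Ghosts

variable {Np Nm : ℕ}

theorem Pp_ne_zero (hp : 0 < Np) : Pp Np Nm ≠ 0 := by
  intro h
  have := congrArg (MvPolynomial.eval fun _ ↦ (1 : ℂ)) h
  simp [Pp, ψ] at this
  omega

theorem exists_eq_Qq_mul_of_Pp_mul_add_Qq_mul_eq_zero (hp : 0 < Np) (hm : 0 < Nm)
    {u v : R2 Np Nm} (h : Pp Np Nm * u + Qq Np Nm * v = 0) :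
    ∃ s, u = Qq Np Nm * s ∧ v = -(Pp Np Nm * s) := by
  obtain ⟨a, rfl⟩ : ∃ a, Np = a + 1 := ⟨Np - 1, by omega⟩
  obtain ⟨b, rfl⟩ : ∃ b, Nm = b + 1 := ⟨Nm - 1, by omega⟩
  have h' : Polynomial.C (Polynomial.X ^ 2 + Polynomial.C (Pp a b)) * splitGhosts a b u
      + (Polynomial.X ^ 2 + Polynomial.C (Polynomial.C (Qq a b))) * splitGhosts a b v = 0 := by
    rw [← splitGhosts_Pp, ← splitGhosts_Qq, ← map_mul, ← map_mul, ← map_add, h, map_zero]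
  obtain ⟨s, hu, hv⟩ := Polynomial.exists_eq_mul_of_mul_add_mul_eq_zero _ _ h'
  refine ⟨(splitGhosts a b).symm s, (splitGhosts a b).injective ?_,
    (splitGhosts a b).injective ?_⟩ <;> simp [hu, hv, splitGhosts_Pp, splitGhosts_Qq]

theorem exists_eq_add_Pp_mul_add_Qq_mul (hp : 0 < Np) (hm : 0 < Nm) (r : R2 Np Nm) :
    ∃ a₀₀ ∈ coefRing Np Nm hp hm, ∃ a₁₀ ∈ coefRing Np Nm hp hm,
    ∃ a₀₁ ∈ coefRing Np Nm hp hm, ∃ a₁₁ ∈ coefRing Np Nm hp hm, ∃ u v,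
      r = a₀₀ + ψ ⟨0, hp⟩ * a₁₀ + χ ⟨0, hm⟩ * a₀₁ + ψ ⟨0, hp⟩ * χ ⟨0, hm⟩ * a₁₁
        + Pp Np Nm * u + Qq Np Nm * v := by
  obtain ⟨a, rfl⟩ : ∃ a, Np = a + 1 := ⟨Np - 1, by omega⟩
  obtain ⟨b, rfl⟩ : ∃ b, Nm = b + 1 := ⟨Nm - 1, by omega⟩
  obtain ⟨y₀₀, y₁₀, y₀₁, y₁₁, u, v, hr⟩ :=
    Polynomial.exists_eq_reducedForm_add (Pp a b) (Qq a b) (splitGhosts a b r)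
  simp only [coefRing_succ, AlgHom.mem_range, exists_exists_eq_and]
  refine ⟨y₀₀, y₁₀, y₀₁, y₁₁, (splitGhosts a b).symm u, (splitGhosts a b).symm v,
    (splitGhosts a b).injective ?_⟩
  rw [map_add, map_add, splitGhosts_reducedForm, map_mul, map_mul, splitGhosts_Pp,
    splitGhosts_Qq, AlgEquiv.apply_symm_apply, AlgEquiv.apply_symm_apply, hr]

theorem eq_zero_of_add_eq_Pp_mul_add_Qq_mul (hp : 0 < Np) (hm : 0 < Nm)
    {a₀₀ a₁₀ a₀₁ a₁₁ u v : R2 Np Nm}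
    (h₀₀ : a₀₀ ∈ coefRing Np Nm hp hm) (h₁₀ : a₁₀ ∈ coefRing Np Nm hp hm)
    (h₀₁ : a₀₁ ∈ coefRing Np Nm hp hm) (h₁₁ : a₁₁ ∈ coefRing Np Nm hp hm)
    (h : a₀₀ + ψ ⟨0, hp⟩ * a₁₀ + χ ⟨0, hm⟩ * a₀₁ + ψ ⟨0, hp⟩ * χ ⟨0, hm⟩ * a₁₁
      = Pp Np Nm * u + Qq Np Nm * v) :
    a₀₀ = 0 ∧ a₁₀ = 0 ∧ a₀₁ = 0 ∧ a₁₁ = 0 := by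
  obtain ⟨a, rfl⟩ : ∃ a, Np = a + 1 := ⟨Np - 1, by omega⟩
  obtain ⟨b, rfl⟩ : ∃ b, Nm = b + 1 := ⟨Nm - 1, by omega⟩
  simp only [coefRing_succ, AlgHom.mem_range] at h₀₀ h₁₀ h₀₁ h₁₁
  obtain ⟨y₀₀, rfl⟩ := h₀₀
  obtain ⟨y₁₀, rfl⟩ := h₁₀
  obtain ⟨y₀₁, rfl⟩ := h₀₁
  obtain ⟨y₁₁, rfl⟩ := h₁₁
  have h' := congrArg (splitGhosts a b) h
  rw [splitGhosts_reducedForm, map_add, map_mul, map_mul, splitGhosts_Pp, splitGhosts_Qq] at h'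
  obtain ⟨rfl, rfl, rfl, rfl⟩ := Polynomial.eq_zero_of_reducedForm_eq_mul_add_mul _ _ h'
  simp

end Ghosts

section Differential

variable {Np Nm : ℕ}

theorem d2_sub (ω ω' : Om2 Np Nm) : d2 (ω - ω') = d2 ω - d2 ω' := by
  funext i
  fin_cases i <;> simp [d2] <;> ring

theorem d2_d2 (ω : Om2 Np Nm) : d2 (d2 ω) = 0 := by
  funext i
  fin_cases i <;> simp [d2]
  ring

theorem d2_ofR (r : R2 Np Nm) : d2 (ofR r) = 0 := by
  funext i
  fin_cases i <;> simp [d2, ofR]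

theorem Equiv2.d2_eq {ω ω' : Om2 Np Nm} (h : Equiv2 ω ω') : d2 ω = d2 ω' := by
  obtain ⟨ρ, hρ⟩ := h
  rw [← sub_eq_zero, ← d2_sub, hρ, d2_d2]

theorem d2_eq_zero_iff (hP : Pp Np Nm ≠ 0) {ω : Om2 Np Nm} :
    d2 ω = 0 ↔ Pp Np Nm * ω 1 + Qq Np Nm * ω 2 = 0 ∧ ω 3 = 0 := by
  constructor
  · intro h
    exact ⟨congrFun h 0, (mul_eq_zero.1 (congrFun h 2)).resolve_left hP⟩
  · rintro ⟨h, h3⟩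
    funext i
    fin_cases i <;> simp [d2, h, h3]

theorem equiv2_ofR_of_eq {ω : Om2 Np Nm} {r u v s : R2 Np Nm}
    (h₀ : ω 0 = r + Pp Np Nm * u + Qq Np Nm * v) (h₁ : ω 1 = Qq Np Nm * s)
    (h₂ : ω 2 = -(Pp Np Nm * s)) (h₃ : ω 3 = 0) : Equiv2 ω (ofR r) := by
  refine ⟨![0, u, v, -s], ?_⟩
  funext i
  fin_cases i <;> simp [d2, ofR, h₀, h₁, h₂, h₃]
  ring

theorem equiv2_ofR_zero_iff {r : R2 Np Nm} :
    Equiv2 (ofR r) 0 ↔ ∃ u v, r = Pp Np Nm * u + Qq Np Nm * v := by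
  constructor
  · rintro ⟨ρ, hρ⟩
    exact ⟨ρ 1, ρ 2, by simpa [d2, ofR] using congrFun hρ 0⟩
  · rintro ⟨u, v, hr⟩
    refine ⟨![0, u, v, 0], ?_⟩
    funext i
    fin_cases i <;> simp [d2, ofR, hr]

end Differential

/-- for `N₊ ≥ 1`, `N₋ ≥ 1`, (i) `dω = 0` iff
`ω ∼ a₀₀ + ψ₁a₁₀ + χ₁a₀₁ + ψ₁χ₁a₁₁` with coefficients in
`ℂ[ψ₂,…,ψ_{N₊}, χ₂,…,χ_{N₋}]`; (ii) such a combination is `∼ 0` iff all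
coefficients vanish. -/
theorem stmt0 (Np Nm : ℕ) (hp : 0 < Np) (hm : 0 < Nm) :
    (∀ ω : Om2 Np Nm, d2 ω = 0 ↔
      ∃ a00 ∈ coefRing Np Nm hp hm, ∃ a10 ∈ coefRing Np Nm hp hm,
      ∃ a01 ∈ coefRing Np Nm hp hm, ∃ a11 ∈ coefRing Np Nm hp hm,
        Equiv2 ω (ofR (a00 + ψ ⟨0, hp⟩ * a10 + χ ⟨0, hm⟩ * a01
          + ψ ⟨0, hp⟩ * χ ⟨0, hm⟩ * a11)))
    ∧
    (∀ a00 a10 a01 a11 : R2 Np Nm,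
      a00 ∈ coefRing Np Nm hp hm → a10 ∈ coefRing Np Nm hp hm →
      a01 ∈ coefRing Np Nm hp hm → a11 ∈ coefRing Np Nm hp hm →
      (Equiv2 (ofR (a00 + ψ ⟨0, hp⟩ * a10 + χ ⟨0, hm⟩ * a01
          + ψ ⟨0, hp⟩ * χ ⟨0, hm⟩ * a11)) 0 ↔
        a00 = 0 ∧ a10 = 0 ∧ a01 = 0 ∧ a11 = 0)) := by
  refine ⟨fun ω ↦ ⟨fun hω ↦ ?_, ?_⟩, fun a00 a10 a01 a11 h00 h10 h01 h11 ↦ ?_⟩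
  · obtain ⟨hcycle, h₃⟩ := (d2_eq_zero_iff (Pp_ne_zero hp)).1 hω
    obtain ⟨s, h₁, h₂⟩ := exists_eq_Qq_mul_of_Pp_mul_add_Qq_mul_eq_zero hp hm hcycle
    obtain ⟨a00, h00, a10, h10, a01, h01, a11, h11, u, v, h₀⟩ :=
      exists_eq_add_Pp_mul_add_Qq_mul hp hm (ω 0)
    exact ⟨a00, h00, a10, h10, a01, h01, a11, h11, equiv2_ofR_of_eq h₀ h₁ h₂ h₃⟩
  · rintro ⟨_, -, _, -, _, -, _, -, hω⟩
    rw [Equiv2.d2_eq hω, d2_ofR]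
  · rw [equiv2_ofR_zero_iff]
    constructor
    · rintro ⟨u, v, h⟩
      exact eq_zero_of_add_eq_Pp_mul_add_Qq_mul hp hm h00 h10 h01 h11 h
    · rintro ⟨rfl, rfl, rfl, rfl⟩
      exact ⟨0, 0, by ring⟩
end
end

section
/- Assume N₊ = 0 and N₋ ≥ 1 (so P = 0 and dc̃₁ = 0). Then (i) an element ω ∈ Ω satisfies dω = 0 if and only if ω ∼ (b₀₀ + c̃₁b₀₁) + χ₁(b₁₀ + c̃₁b₁₁) for some polynomials b₀₀, b₀₁, b₁₀, b₁₁ lying in the subring ℂ[χ₂,…,χ_{N₋}] of R (complex constants when N₋ = 1); and (ii) (b₀₀ + c̃₁b₀₁) + χ₁(b₁₀ + c̃₁b₁₁) ∼ 0 for such coefficients if and only if b₀₀ = b₀₁ = b₁₀ = b₁₁ = 0. -/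
/-!
D = 2, signature (1,1) supersymmetry algebra cohomology.
`R2 Np Nm = ℂ[ψ₁,…,ψ_{N₊}, χ₁,…,χ_{N₋}]`, `Om2` is the free module with basis
`{1, c̃₁, c̃₂, c̃₁c̃₂}`, and `d2` is the differential with `dc̃₁ = P`, `dc̃₂ = Q`.
-/

open MvPolynomial

noncomputable section

/-- The subring `ℂ[χ₂,…,χ_{N₋}]` of `R2 0 Nm`. -/
def coefRingM (Nm : ℕ) (hm : 0 < Nm) : Subalgebra ℂ (R2 0 Nm) :=
  MvPolynomial.supported ℂ {v : Fin 0 ⊕ Fin Nm | v ≠ Sum.inr ⟨0, hm⟩}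


/-!
Without ψ's we have `P = 0`, so `d` only multiplies the `c̃₂` and `c̃₁c̃₂` components by `Q`,
which is not a zero divisor. Hence the cocycles are the `ω` with `ω₂ = ω₃ = 0`, and the
cohomology is `(R/Q)²`, read off the components `1` and `c̃₁`. Viewed as a polynomial in
`χ₁` over `ℂ[χ₂,…,χ_{N₋}]`, `Q = χ₁² + Σ_{j≥2} χⱼ²` is monic of degree 2, so division with
remainder shows that `R/Q` is free over `ℂ[χ₂,…,χ_{N₋}]` with basis `1, χ₁`.
-/

namespace Polynomial

variable {R : Type*} [CommRing R] {q : R[X]}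

theorem exists_dvd_sub_C_add_X_mul_C (hq : q.Monic) (hq2 : q.natDegree = 2) (p : R[X]) :
    ∃ a b : R, q ∣ p - (C a + X * C b) := by
  have hr : (p %ₘ q).natDegree ≤ 1 := by
    have := natDegree_modByMonic_lt p hq (by rintro rfl; simp at hq2)
    omega
  refine ⟨(p %ₘ q).coeff 0, (p %ₘ q).coeff 1, p /ₘ q, ?_⟩
  linear_combination eq_X_add_C_of_natDegree_le_one hr - modByMonic_add_div p q

theorem eq_zero_of_dvd_C_add_X_mul_C [Nontrivial R] (hq : q.Monic) (hq2 : q.natDegree = 2)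
    {a b : R} (h : q ∣ C a + X * C b) : a = 0 ∧ b = 0 := by
  have hdeg : (C a + X * C b).degree < q.degree := by
    rw [degree_eq_natDegree hq.ne_zero, hq2]
    exact lt_of_le_of_lt (by compute_degree) (by decide)
  have h0 : C a + X * C b = 0 :=
    ((modByMonic_eq_self_iff hq).2 hdeg).symm.trans ((modByMonic_eq_zero_iff_dvd hq).2 h)
  exact ⟨by simpa using congrArg (coeff · 0) h0, by simpa using congrArg (coeff · 1) h0⟩

end Polynomial

namespace MvPolynomial

variable {σ R : Type*} [DecidableEq σ] [CommRing R]

variable (R) in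
def polynomialInVarEquiv (i : σ) :
    MvPolynomial σ R ≃ₐ[R] Polynomial (MvPolynomial {j // j ≠ i} R) :=
  (renameEquiv R (Equiv.optionSubtypeNe i).symm).trans (optionEquivLeft R _)

variable {i : σ}

@[simp]
theorem polynomialInVarEquiv_X_self : polynomialInVarEquiv R i (X i) = Polynomial.X := by
  simp [polynomialInVarEquiv]

@[simp]
theorem polynomialInVarEquiv_rename_val (p : MvPolynomial {j // j ≠ i} R) :
    polynomialInVarEquiv R i (rename Subtype.val p) = Polynomial.C p := by
  induction p using MvPolynomial.induction_on with
  | C a => simp [polynomialInVarEquiv]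
  | add p q hp hq => simp only [map_add, hp, hq]
  | mul_X p j hp =>
    rw [map_mul, map_mul, hp, rename_X, Polynomial.C_mul]
    simp [polynomialInVarEquiv, Equiv.optionSubtypeNe_symm_of_ne j.2]

theorem polynomialInVarEquiv_X_of_ne {j : σ} (hj : j ≠ i) :
    polynomialInVarEquiv R i (X j) = Polynomial.C (X ⟨j, hj⟩) := by
  simpa using polynomialInVarEquiv_rename_val (R := R) (X ⟨j, hj⟩)

theorem exists_dvd_sub_add_X_mul {q : MvPolynomial σ R}
    (hq : (polynomialInVarEquiv R i q).Monic) (hq2 : (polynomialInVarEquiv R i q).natDegree = 2)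
    (r : MvPolynomial σ R) :
    ∃ b₀ ∈ supported R {j | j ≠ i}, ∃ b₁ ∈ supported R {j | j ≠ i}, q ∣ r - (b₀ + X i * b₁) := by
  obtain ⟨a, b, h⟩ := Polynomial.exists_dvd_sub_C_add_X_mul_C hq hq2 (polynomialInVarEquiv R i r)
  rw [supported_eq_range_rename]
  refine ⟨rename Subtype.val a, ⟨a, rfl⟩, rename Subtype.val b, ⟨b, rfl⟩, ?_⟩
  rw [← map_dvd_iff (polynomialInVarEquiv R i)]
  simpa using h

theorem eq_zero_of_dvd_add_X_mul [Nontrivial R] {q : MvPolynomial σ R}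
    (hq : (polynomialInVarEquiv R i q).Monic) (hq2 : (polynomialInVarEquiv R i q).natDegree = 2)
    {b₀ b₁ : MvPolynomial σ R} (hb₀ : b₀ ∈ supported R {j | j ≠ i})
    (hb₁ : b₁ ∈ supported R {j | j ≠ i}) (h : q ∣ b₀ + X i * b₁) : b₀ = 0 ∧ b₁ = 0 := by
  rw [supported_eq_range_rename] at hb₀ hb₁
  obtain ⟨a, rfl⟩ := hb₀
  obtain ⟨b, rfl⟩ := hb₁
  rw [← map_dvd_iff (polynomialInVarEquiv R i)] at h
  obtain ⟨rfl, rfl⟩ := Polynomial.eq_zero_of_dvd_C_add_X_mul_C hq hq2 (by simpa using h)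
  simp

end MvPolynomial

section

variable {Nm : ℕ} (hm : 0 < Nm)

theorem exists_polynomialInVarEquiv_Qq :
    ∃ c, polynomialInVarEquiv ℂ (Sum.inr ⟨0, hm⟩) (Qq 0 Nm) =
      Polynomial.X ^ 2 + Polynomial.C c := by
  rw [Qq, ← Finset.add_sum_erase _ _ (Finset.mem_univ ⟨0, hm⟩), map_add, map_sum]
  obtain ⟨c, hc⟩ : ∑ j ∈ Finset.univ.erase ⟨0, hm⟩,
      polynomialInVarEquiv ℂ (Sum.inr ⟨0, hm⟩) (χ (Np := 0) j ^ 2) ∈ (Polynomial.C).range := by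
    refine Subring.sum_mem _ fun j hj => ?_
    have hj' : (Sum.inr j : Fin 0 ⊕ Fin Nm) ≠ Sum.inr ⟨0, hm⟩ := by
      simpa using Finset.ne_of_mem_erase hj
    exact ⟨X ⟨_, hj'⟩ ^ 2, by rw [map_pow, χ, map_pow, polynomialInVarEquiv_X_of_ne hj']⟩
  refine ⟨c, ?_⟩
  rw [hc, map_pow, χ, polynomialInVarEquiv_X_self]

theorem monic_polynomialInVarEquiv_Qq :
    (polynomialInVarEquiv ℂ (Sum.inr ⟨0, hm⟩) (Qq 0 Nm)).Monic := by
  obtain ⟨c, hc⟩ := exists_polynomialInVarEquiv_Qq hm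
  exact hc ▸ Polynomial.monic_X_pow_add_C c two_ne_zero

theorem natDegree_polynomialInVarEquiv_Qq :
    (polynomialInVarEquiv ℂ (Sum.inr ⟨0, hm⟩) (Qq 0 Nm)).natDegree = 2 := by
  obtain ⟨c, hc⟩ := exists_polynomialInVarEquiv_Qq hm
  rw [hc, Polynomial.natDegree_X_pow_add_C]

end

section

variable {Nm : ℕ}

theorem Qq_ne_zero (hm : 0 < Nm) : Qq 0 Nm ≠ 0 := fun h => by
  simpa [h] using natDegree_polynomialInVarEquiv_Qq hm

theorem Pp_zero_left : Pp 0 Nm = 0 := by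
  simp [Pp]

theorem d2_zero_left (ω : Om2 0 Nm) : d2 ω = ![Qq 0 Nm * ω 2, -(Qq 0 Nm * ω 3), 0, 0] := by
  simp [d2, Pp_zero_left]

theorem d2_zero_left_eq_zero_iff (hm : 0 < Nm) (ω : Om2 0 Nm) :
    d2 ω = 0 ↔ ω 2 = 0 ∧ ω 3 = 0 := by
  simp [d2_zero_left, funext_iff, Fin.forall_fin_succ, Qq_ne_zero hm]

theorem equiv2_zero_left_iff (ω ω' : Om2 0 Nm) :
    Equiv2 ω ω' ↔ Qq 0 Nm ∣ ω 0 - ω' 0 ∧ Qq 0 Nm ∣ ω 1 - ω' 1 ∧ ω 2 = ω' 2 ∧ ω 3 = ω' 3 := by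
  simp only [Equiv2, d2_zero_left]
  constructor
  · rintro ⟨ρ, hρ⟩
    have h i := congrFun hρ i
    exact ⟨⟨ρ 2, by simpa using h 0⟩, ⟨-ρ 3, by simpa using h 1⟩,
      sub_eq_zero.1 (by simpa using h 2), sub_eq_zero.1 (by simpa using h 3)⟩
  · rintro ⟨⟨s₀, h₀⟩, ⟨s₁, h₁⟩, h₂, h₃⟩
    refine ⟨![0, 0, s₀, -s₁], funext fun i => ?_⟩
    fin_cases i <;> simp [h₀, h₁, h₂, h₃]

end

/-- for `N₊ = 0`, `N₋ ≥ 1` (so `P = 0`, `dc̃₁ = 0`),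
(i) `dω = 0` iff `ω ∼ (b₀₀ + c̃₁b₀₁) + χ₁(b₁₀ + c̃₁b₁₁)` with coefficients in
`ℂ[χ₂,…,χ_{N₋}]`; (ii) such a combination is `∼ 0` iff all coefficients vanish. -/
theorem stmt2 (Nm : ℕ) (hm : 0 < Nm) :
    (∀ ω : Om2 0 Nm, d2 ω = 0 ↔
      ∃ b00 ∈ coefRingM Nm hm, ∃ b01 ∈ coefRingM Nm hm,
      ∃ b10 ∈ coefRingM Nm hm, ∃ b11 ∈ coefRingM Nm hm,
        Equiv2 ω ![b00 + χ ⟨0, hm⟩ * b10, b01 + χ ⟨0, hm⟩ * b11, 0, 0])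
    ∧
    (∀ b00 b01 b10 b11 : R2 0 Nm,
      b00 ∈ coefRingM Nm hm → b01 ∈ coefRingM Nm hm →
      b10 ∈ coefRingM Nm hm → b11 ∈ coefRingM Nm hm →
      (Equiv2 ![b00 + χ ⟨0, hm⟩ * b10, b01 + χ ⟨0, hm⟩ * b11, 0, 0] 0 ↔
        b00 = 0 ∧ b01 = 0 ∧ b10 = 0 ∧ b11 = 0)) := by
  have hQ := monic_polynomialInVarEquiv_Qq hm
  have hQ2 := natDegree_polynomialInVarEquiv_Qq hm
  refine ⟨fun ω => ⟨fun hd => ?_, ?_⟩, fun b00 b01 b10 b11 h00 h01 h10 h11 => ⟨fun h => ?_, ?_⟩⟩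
  · obtain ⟨h₂, h₃⟩ := (d2_zero_left_eq_zero_iff hm ω).1 hd
    obtain ⟨b00, h00, b10, h10, h₀⟩ := exists_dvd_sub_add_X_mul hQ hQ2 (ω 0)
    obtain ⟨b01, h01, b11, h11, h₁⟩ := exists_dvd_sub_add_X_mul hQ hQ2 (ω 1)
    exact ⟨b00, h00, b01, h01, b10, h10, b11, h11,
      (equiv2_zero_left_iff _ _).2 ⟨h₀, h₁, h₂, h₃⟩⟩
  · rintro ⟨_, _, _, _, _, _, _, _, h⟩
    obtain ⟨-, -, h₂, h₃⟩ := (equiv2_zero_left_iff _ _).1 h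
    exact (d2_zero_left_eq_zero_iff hm ω).2 ⟨h₂, h₃⟩
  · obtain ⟨h₀, h₁, -, -⟩ := (equiv2_zero_left_iff _ _).1 h
    obtain ⟨rfl, rfl⟩ := eq_zero_of_dvd_add_X_mul hQ hQ2 h00 h10 (by simpa [χ] using h₀)
    obtain ⟨rfl, rfl⟩ := eq_zero_of_dvd_add_X_mul hQ hQ2 h01 h11 (by simpa [χ] using h₁)
    simp
  · rintro ⟨rfl, rfl, rfl, rfl⟩
    exact (equiv2_zero_left_iff _ _).2 (by simp)
end
end

section
/- Assume N₊ ≥ 1 and N₋ ≥ 1, and let S be an arbitrary invertible 2×2 complex matrix. Then (i) an element ω ∈ Ω satisfies dω = 0 if and only if ω ∼ a + Σ_α ξ₁₊^α a₊_α + Σ_α ξ₁₋^α a₋_α + (Σ_{α,β} ξ₁₊^α ξ₁₋^β (ΓC⁻¹)_{αβ}) a₊₋ for some polynomials a, a₊_α, a₋_α, a₊₋ lying in the subring ℂ[ψ₂,…,ψ_{N₊}, χ₂,…,χ_{N₋}] of R; and (ii) such a combination is ∼ 0 if and only if a = a₊₋ = 0, Σ_α ξ₁₊^α a₊_α = 0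 and Σ_α ξ₁₋^α a₋_α = 0. -/
/-!
D = 2, signature (1,1) supersymmetry algebra cohomology.
`R2 Np Nm = ℂ[ψ₁,…,ψ_{N₊}, χ₁,…,χ_{N₋}]`, `Om2` is the free module with basis
`{1, c̃₁, c̃₂, c̃₁c̃₂}`, and `d2` is the differential with `dc̃₁ = P`, `dc̃₂ = Q`.
-/

open MvPolynomial

noncomputable section

/-- Pauli matrix σ₂. -/
def sigma2 : Matrix (Fin 2) (Fin 2) ℂ := !![0, -Complex.I; Complex.I, 0]

/-- Pauli matrix σ₃. -/
def sigma3 : Matrix (Fin 2) (Fin 2) ℂ := !![1, 0; 0, -1]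

/-- Chirality matrix `Γ = S σ₃ S⁻¹` in the representation given by `S`. -/
def Gam (S : Matrix (Fin 2) (Fin 2) ℂ) : Matrix (Fin 2) (Fin 2) ℂ := S * sigma3 * S⁻¹

/-- Charge conjugation matrix `C = (Sᵀ)⁻¹ σ₂ S⁻¹` in the representation given by `S`. -/
def Cmat (S : Matrix (Fin 2) (Fin 2) ℂ) : Matrix (Fin 2) (Fin 2) ℂ :=
  (S.transpose)⁻¹ * sigma2 * S⁻¹

/-- The positive-chirality supersymmetry ghost `ξᵢ₊ = (ψᵢ, 0)·S⁻¹`. -/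
def xiP {Np Nm : ℕ} (S : Matrix (Fin 2) (Fin 2) ℂ) (i : Fin Np) (α : Fin 2) :
    R2 Np Nm := C (S⁻¹ 0 α) * ψ i

/-- The negative-chirality supersymmetry ghost `ξᵢ₋ = (0, iχᵢ)·S⁻¹`. -/
def xiM {Np Nm : ℕ} (S : Matrix (Fin 2) (Fin 2) ℂ) (i : Fin Nm) (α : Fin 2) :
    R2 Np Nm := C (Complex.I * S⁻¹ 1 α) * χ i

/-!
Put `x = ψ₁`, `y = χ₁` and `A = ℂ[ψ₂,…,ψ_{N₊}, χ₂,…,χ_{N₋}]`, so that `R = A[x][y]`,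
`P = x² + p` and `Q = y² + q` with `p, q ∈ A`. As `P` and `Q` are monic of degree two in `x` and
in `y`, division with remainder shows that `R / (P, Q)` is free over `A` with basis
`1, x, y, xy`, and that `Q, P` is a regular sequence. A cocycle has `Qω₃ = 0` and
`Pω₁ + Qω₂ = 0`, hence `ω₃ = 0`, `ω₁ = Qu`, `ω₂ = -Pu`, so it is cohomologous to its
`R`-component, and `ofR r ∼ 0` iff `r ∈ (P, Q)`. On the spinor side, `ξ₁₊` and `ξ₁₋` are `x`
times the first and `iy` times the second row of `S⁻¹`, and `S⁻¹ Γ C⁻¹ (S⁻¹)ᵀ = σ₃σ₂` turns the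
bilinear combination of the ghosts into `xy`.
-/

namespace Polynomial

variable {R : Type*}

theorem C_mul_X_add_C_eq_zero_iff [Semiring R] {a b : R} :
    C a * X + C b = 0 ↔ a = 0 ∧ b = 0 := by
  refine ⟨fun h => ⟨?_, ?_⟩, fun ⟨ha, hb⟩ => by simp [ha, hb]⟩
  · simpa using congrArg (coeff · 1) h
  · simpa using congrArg (coeff · 0) h

theorem exists_eq_mul_add_C_mul_X_add_C [Ring R] [Nontrivial R] {p : R[X]} (hp : p.Monic)
    (hp2 : p.degree ≤ 2) (f : R[X]) : ∃ q a b, f = p * q + (C a * X + C b) := by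
  have hdeg : (f %ₘ p).degree ≤ 1 :=
    Order.le_of_lt_succ ((degree_modByMonic_lt f hp).trans_le hp2)
  refine ⟨f /ₘ p, (f %ₘ p).coeff 1, (f %ₘ p).coeff 0, ?_⟩
  rw [← eq_X_add_C_of_degree_le_one hdeg, add_comm, modByMonic_add_div]

theorem Monic.dvd_of_dvd_C_mul_s3 [CommRing R] [IsDomain R] {W : R[X]} (hW : W.Monic) {r : R}
    (hr : r ≠ 0) {f : R[X]} (h : W ∣ C r * f) : W ∣ f := by
  rw [← modByMonic_eq_zero_iff_dvd hW] at h ⊢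
  rw [← smul_eq_C_mul, smul_modByMonic, smul_eq_C_mul] at h
  exact (mul_eq_zero.1 h).resolve_left (C_ne_zero.2 hr)

theorem exists_eq_C_mul_add_mul_add [CommRing R] [Nontrivial R] {w : R[X]} {W : R[X][X]}
    (hw : w.Monic) (hw2 : w.degree ≤ 2) (hW : W.Monic) (hW2 : W.degree ≤ 2) (f : R[X][X]) :
    ∃ s t a b c e, f = C w * s + W * t + (C (C e * X + C c) * X + C (C b * X + C a)) := by
  obtain ⟨t, g₁, g₀, rfl⟩ := exists_eq_mul_add_C_mul_X_add_C hW hW2 f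
  obtain ⟨q₁, e, c, rfl⟩ := exists_eq_mul_add_C_mul_X_add_C hw hw2 g₁
  obtain ⟨q₀, b, a, rfl⟩ := exists_eq_mul_add_C_mul_X_add_C hw hw2 g₀
  refine ⟨C q₁ * X + C q₀, t, a, b, c, e, ?_⟩
  simp only [map_add, map_mul]
  ring

theorem eq_zero_of_C_mul_X_add_C_eq_C_mul_add_mul [CommRing R] [IsDomain R] {w : R[X]}
    {W : R[X][X]} (hW : W.Monic) (hW1 : 1 < W.degree) {f₁ f₀ : R[X]}
    (hf₁ : f₁.degree < w.degree) (hf₀ : f₀.degree < w.degree) {s t : R[X][X]}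
    (h : C f₁ * X + C f₀ = C w * s + W * t) : f₁ = 0 ∧ f₀ = 0 := by
  have hred : C f₁ * X + C f₀ = C w * (s %ₘ W) := calc
    C f₁ * X + C f₀ = (C f₁ * X + C f₀) %ₘ W :=
      ((modByMonic_eq_self_iff hW).2 (degree_linear_le.trans_lt hW1)).symm
    _ = (C w * s) %ₘ W := modByMonic_eq_of_dvd_sub hW ⟨t, by rw [h]; ring⟩
    _ = C w * (s %ₘ W) := by rw [← smul_eq_C_mul, smul_modByMonic, smul_eq_C_mul]
  have hcoeff (n : ℕ) : w ∣ (C f₁ * X + C f₀).coeff n :=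
    ⟨(s %ₘ W).coeff n, by rw [hred, coeff_C_mul]⟩
  constructor
  · simpa using eq_zero_of_dvd_of_degree_lt (by simpa using hcoeff 1) hf₁
  · simpa using eq_zero_of_dvd_of_degree_lt (by simpa using hcoeff 0) hf₀

theorem eq_zero_of_multiaffine_eq_C_mul_add_mul [CommRing R] [IsDomain R] {w : R[X]}
    {W : R[X][X]} (hw1 : 1 < w.degree) (hW : W.Monic) (hW1 : 1 < W.degree) {a b c e : R}
    {s t : R[X][X]} (h : C (C e * X + C c) * X + C (C b * X + C a) = C w * s + W * t) :
    a = 0 ∧ b = 0 ∧ c = 0 ∧ e = 0 := by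
  have hlin (u v : R) : (C u * X + C v).degree < w.degree := degree_linear_le.trans_lt hw1
  obtain ⟨h₁, h₀⟩ := eq_zero_of_C_mul_X_add_C_eq_C_mul_add_mul hW hW1 (hlin e c) (hlin b a) h
  rw [C_mul_X_add_C_eq_zero_iff] at h₁ h₀
  exact ⟨h₀.2, h₀.1, h₁.2, h₁.1⟩

end Polynomial

namespace MvPolynomial

theorem exists_sum_X_sq_eq_X_sq_add {R σ ι : Type*} [CommSemiring R] [Nontrivial R] [Fintype ι]
    [DecidableEq ι] (f : ι → σ) (i₀ : ι) {s : Set σ} (hs : ∀ i ≠ i₀, f i ∈ s) :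
    ∃ q ∈ supported R s, ∑ i, X (f i) ^ 2 = X (f i₀) ^ 2 + q :=
  ⟨∑ i ∈ Finset.univ.erase i₀, X (f i) ^ 2,
    Subalgebra.sum_mem _ fun i hi =>
      pow_mem (X_mem_supported.2 (hs i (Finset.ne_of_mem_erase hi))) 2,
    (Finset.add_sum_erase _ _ (Finset.mem_univ i₀)).symm⟩

variable {R σ : Type*} [CommSemiring R] [DecidableEq σ] {x y : σ}

def optionOptionEquivOfNe (hxy : x ≠ y) : Option (Option {v | v ≠ x ∧ v ≠ y}) ≃ σ where
  toFun
    | none => y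
    | some none => x
    | some (some v) => v
  invFun v :=
    if hy : v = y then none else if hx : v = x then some none else some (some ⟨v, hx, hy⟩)
  left_inv := by rintro (_ | _ | ⟨v, hvx, hvy⟩) <;> simp [*]
  right_inv v := by
    by_cases hy : v = y
    · simp [hy]
    · by_cases hx : v = x
      · subst hx; simp [hxy]
      · simp [hx, hy]

def splitTwoVarsEquiv (hxy : x ≠ y) :
    MvPolynomial σ R ≃ₐ[R] Polynomial (Polynomial (MvPolynomial {v | v ≠ x ∧ v ≠ y} R)) :=
  (renameEquiv R (optionOptionEquivOfNe hxy).symm).trans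
    ((optionEquivLeft R _).trans (Polynomial.mapAlgEquiv (optionEquivLeft R _)))

variable (hxy : x ≠ y)

theorem splitTwoVarsEquiv_X_left :
    splitTwoVarsEquiv (R := R) hxy (X x) = Polynomial.C Polynomial.X := by
  simp [splitTwoVarsEquiv, optionOptionEquivOfNe, hxy]

theorem splitTwoVarsEquiv_X_right : splitTwoVarsEquiv (R := R) hxy (X y) = Polynomial.X := by
  simp [splitTwoVarsEquiv, optionOptionEquivOfNe]

theorem splitTwoVarsEquiv_X_of_ne {v : σ} (hvx : v ≠ x) (hvy : v ≠ y) :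
    splitTwoVarsEquiv (R := R) hxy (X v) = Polynomial.C (Polynomial.C (X ⟨v, hvx, hvy⟩)) := by
  simp [splitTwoVarsEquiv, optionOptionEquivOfNe, hvx, hvy]

theorem splitTwoVarsEquiv_rename_val (a : MvPolynomial {v | v ≠ x ∧ v ≠ y} R) :
    splitTwoVarsEquiv hxy (rename Subtype.val a) = Polynomial.C (Polynomial.C a) := by
  induction a using MvPolynomial.induction_on with
  | C r => simp [splitTwoVarsEquiv]
  | add p q hp hq => simp only [map_add, hp, hq]
  | mul_X p v hp =>
    simp only [map_mul, hp, rename_X, splitTwoVarsEquiv_X_of_ne hxy v.2.1 v.2.2]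

theorem mem_supported_iff_splitTwoVarsEquiv {r : MvPolynomial σ R} :
    r ∈ supported R {v | v ≠ x ∧ v ≠ y} ↔
      ∃ a, splitTwoVarsEquiv hxy r = Polynomial.C (Polynomial.C a) := by
  rw [supported_eq_range_rename, AlgHom.mem_range]
  refine exists_congr fun a => ?_
  rw [← splitTwoVarsEquiv_rename_val hxy, (splitTwoVarsEquiv hxy).injective.eq_iff, eq_comm]

end MvPolynomial


theorem C_mul_mem_coefRing {Np Nm : ℕ} {hp : 0 < Np} {hm : 0 < Nm} (z : ℂ) {r : R2 Np Nm}
    (hr : r ∈ coefRing Np Nm hp hm) : C z * r ∈ coefRing Np Nm hp hm := by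
  simpa only [smul_eq_C_mul] using Subalgebra.smul_mem _ hr z

theorem ψ_ne_zero {Np Nm : ℕ} (i : Fin Np) : (ψ i : R2 Np Nm) ≠ 0 := X_ne_zero _

theorem χ_ne_zero {Np Nm : ℕ} (i : Fin Nm) : (χ i : R2 Np Nm) ≠ 0 := X_ne_zero _

section Ghosts

variable {Np Nm : ℕ} (hp : 0 < Np) (hm : 0 < Nm)

abbrev ghostSplit : R2 Np Nm ≃ₐ[ℂ] Polynomial (Polynomial
    (MvPolynomial {v : Fin Np ⊕ Fin Nm | v ≠ Sum.inl ⟨0, hp⟩ ∧ v ≠ Sum.inr ⟨0, hm⟩} ℂ)) :=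
  splitTwoVarsEquiv Sum.inl_ne_inr

theorem mem_coefRing_iff_ghostSplit {r : R2 Np Nm} :
    r ∈ coefRing Np Nm hp hm ↔ ∃ a, ghostSplit hp hm r = Polynomial.C (Polynomial.C a) :=
  mem_supported_iff_splitTwoVarsEquiv _

theorem ghostSplit_ψ : ghostSplit hp hm (ψ ⟨0, hp⟩) = Polynomial.C Polynomial.X :=
  splitTwoVarsEquiv_X_left _

theorem ghostSplit_χ : ghostSplit hp hm (χ ⟨0, hm⟩) = Polynomial.X :=
  splitTwoVarsEquiv_X_right _

theorem exists_ghostSplit_Pp :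
    ∃ w, w.Monic ∧ w.degree = 2 ∧ ghostSplit hp hm (Pp Np Nm) = Polynomial.C w := by
  obtain ⟨q, hq, hP⟩ : ∃ q ∈ coefRing Np Nm hp hm, Pp Np Nm = ψ ⟨0, hp⟩ ^ 2 + q :=
    exists_sum_X_sq_eq_X_sq_add _ _ fun i hi => ⟨by simpa using hi, Sum.inl_ne_inr⟩
  obtain ⟨a, ha⟩ := (mem_coefRing_iff_ghostSplit hp hm).1 hq
  refine ⟨Polynomial.X ^ 2 + Polynomial.C a, Polynomial.monic_X_pow_add_C _ two_ne_zero,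
    Polynomial.degree_X_pow_add_C two_pos _, ?_⟩
  rw [hP, map_add, map_pow, ghostSplit_ψ, ha, map_add, map_pow]

theorem ghostSplit_Qq :
    (ghostSplit hp hm (Qq Np Nm)).Monic ∧ (ghostSplit hp hm (Qq Np Nm)).degree = 2 := by
  obtain ⟨q, hq, hQ⟩ : ∃ q ∈ coefRing Np Nm hp hm, Qq Np Nm = χ ⟨0, hm⟩ ^ 2 + q :=
    exists_sum_X_sq_eq_X_sq_add _ _ fun i hi => ⟨Sum.inr_ne_inl, by simpa using hi⟩
  obtain ⟨a, ha⟩ := (mem_coefRing_iff_ghostSplit hp hm).1 hq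
  rw [hQ, map_add, map_pow, ghostSplit_χ, ha]
  exact ⟨Polynomial.monic_X_pow_add_C _ two_ne_zero, Polynomial.degree_X_pow_add_C two_pos _⟩

theorem Qq_dvd_of_Pp_mul_add_Qq_mul_eq_zero (hp : 0 < Np) (hm : 0 < Nm) {r₁ r₂ : R2 Np Nm}
    (h : Pp Np Nm * r₁ + Qq Np Nm * r₂ = 0) : Qq Np Nm ∣ r₁ := by
  obtain ⟨w, hw, -, hP⟩ := exists_ghostSplit_Pp hp hm
  rw [← map_dvd_iff (ghostSplit hp hm)]
  refine (ghostSplit_Qq hp hm).1.dvd_of_dvd_C_mul_s3 hw.ne_zero ⟨-ghostSplit hp hm r₂, ?_⟩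
  rw [← hP, ← map_mul, mul_neg, ← map_mul, ← map_neg, eq_neg_of_add_eq_zero_left h]

theorem exists_eq_Pp_mul_add_Qq_mul_add (r : R2 Np Nm) :
    ∃ s t, ∃ a ∈ coefRing Np Nm hp hm, ∃ b ∈ coefRing Np Nm hp hm,
      ∃ c ∈ coefRing Np Nm hp hm, ∃ e ∈ coefRing Np Nm hp hm,
        r = Pp Np Nm * s + Qq Np Nm * t
          + (a + ψ ⟨0, hp⟩ * b + χ ⟨0, hm⟩ * c + ψ ⟨0, hp⟩ * χ ⟨0, hm⟩ * e) := by
  obtain ⟨w, hw, hw2, hP⟩ := exists_ghostSplit_Pp hp hm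
  obtain ⟨hQ, hQ2⟩ := ghostSplit_Qq hp hm
  obtain ⟨s, t, a, b, c, e, hr⟩ :=
    Polynomial.exists_eq_C_mul_add_mul_add hw hw2.le hQ hQ2.le (ghostSplit hp hm r)
  have hmem (a) :
      (ghostSplit hp hm).symm (Polynomial.C (Polynomial.C a)) ∈ coefRing Np Nm hp hm :=
    (mem_coefRing_iff_ghostSplit hp hm).2 ⟨a, (ghostSplit hp hm).apply_symm_apply _⟩
  refine ⟨(ghostSplit hp hm).symm s, (ghostSplit hp hm).symm t, _, hmem a, _, hmem b, _, hmem c,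
    _, hmem e, (ghostSplit hp hm).injective ?_⟩
  simp only [map_add, map_mul, AlgEquiv.apply_symm_apply, hP, ghostSplit_ψ, ghostSplit_χ, hr]
  ring

theorem eq_zero_of_add_eq_Pp_mul_add_Qq_mul_s3 {a b c e s t : R2 Np Nm}
    (ha : a ∈ coefRing Np Nm hp hm) (hb : b ∈ coefRing Np Nm hp hm)
    (hc : c ∈ coefRing Np Nm hp hm) (he : e ∈ coefRing Np Nm hp hm)
    (h : a + ψ ⟨0, hp⟩ * b + χ ⟨0, hm⟩ * c + ψ ⟨0, hp⟩ * χ ⟨0, hm⟩ * e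
      = Pp Np Nm * s + Qq Np Nm * t) :
    a = 0 ∧ b = 0 ∧ c = 0 ∧ e = 0 := by
  obtain ⟨w, -, hw2, hP⟩ := exists_ghostSplit_Pp hp hm
  obtain ⟨hQ, hQ2⟩ := ghostSplit_Qq hp hm
  obtain ⟨a', ha'⟩ := (mem_coefRing_iff_ghostSplit hp hm).1 ha
  obtain ⟨b', hb'⟩ := (mem_coefRing_iff_ghostSplit hp hm).1 hb
  obtain ⟨c', hc'⟩ := (mem_coefRing_iff_ghostSplit hp hm).1 hc
  obtain ⟨e', he'⟩ := (mem_coefRing_iff_ghostSplit hp hm).1 he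
  have hE := congrArg (ghostSplit hp hm) h
  simp only [map_add, map_mul, ha', hb', hc', he', hP, ghostSplit_ψ, ghostSplit_χ] at hE
  obtain ⟨rfl, rfl, rfl, rfl⟩ := Polynomial.eq_zero_of_multiaffine_eq_C_mul_add_mul
    (by rw [hw2]; decide) hQ (by rw [hQ2]; decide) (a := a') (b := b') (c := c') (e := e')
    (by rw [← hE]; simp only [map_add, map_mul]; ring)
  simp only [map_zero, EmbeddingLike.map_eq_zero_iff] at ha' hb' hc' he'
  exact ⟨ha', hb', hc', he'⟩

end Ghosts

section Spinors

open scoped Matrix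

variable {Np Nm : ℕ} (S : Matrix (Fin 2) (Fin 2) ℂ)

theorem sum_xiP_mul (i : Fin Np) (f : Fin 2 → R2 Np Nm) :
    ∑ α, xiP S i α * f α = ψ i * ∑ α, C (S⁻¹ 0 α) * f α := by
  rw [Finset.mul_sum]
  exact Finset.sum_congr rfl fun α _ => by rw [xiP]; ring

theorem sum_xiM_mul (i : Fin Nm) (f : Fin 2 → R2 Np Nm) :
    ∑ α, xiM S i α * f α = χ i * ∑ α, C (Complex.I * S⁻¹ 1 α) * f α := by
  rw [Finset.mul_sum]
  exact Finset.sum_congr rfl fun α _ => by rw [xiM]; ring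

theorem sigma2_mul_sigma2 : sigma2 * sigma2 = 1 := by
  ext i j
  fin_cases i <;> fin_cases j <;> simp [sigma2, Matrix.mul_apply, Fin.sum_univ_two]

variable {S}

theorem sum_xiP_mul_C_mul (hS : IsUnit S.det) (i : Fin Np) (b : R2 Np Nm) :
    ∑ α, xiP S i α * (C (S α 0) * b) = ψ i * b := by
  have h : ∑ α, S⁻¹ 0 α * S α 0 = 1 := by
    simpa [Matrix.mul_apply] using congrFun (congrFun (Matrix.nonsing_inv_mul S hS) 0) 0
  simp_rw [sum_xiP_mul, ← mul_assoc, ← map_mul, ← Finset.sum_mul, ← map_sum, h, map_one, one_mul]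

theorem sum_xiM_mul_C_mul (hS : IsUnit S.det) (i : Fin Nm) (c : R2 Np Nm) :
    ∑ α, xiM S i α * (C (-Complex.I * S α 1) * c) = χ i * c := by
  have h : ∑ α, Complex.I * S⁻¹ 1 α * (-Complex.I * S α 1) = 1 := by
    have h11 := congrFun (congrFun (Matrix.nonsing_inv_mul S hS) 1) 1
    simp only [Matrix.mul_apply, Matrix.one_apply_eq, Fin.sum_univ_two] at h11 ⊢
    linear_combination h11 - (S⁻¹ 1 0 * S 0 1 + S⁻¹ 1 1 * S 1 1) * Complex.I_sq
  simp_rw [sum_xiM_mul, ← mul_assoc, ← map_mul, ← Finset.sum_mul, ← map_sum, h, map_one, one_mul]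

theorem inv_mul_Gam_mul_inv_Cmat_mul_transpose_inv (hS : IsUnit S.det) :
    S⁻¹ * (Gam S * (Cmat S)⁻¹) * S⁻¹ᵀ = sigma3 * sigma2 := by
  have hinvCmat : (Cmat S)⁻¹ = S * sigma2 * Sᵀ := by
    rw [Cmat, Matrix.mul_inv_rev, Matrix.mul_inv_rev, Matrix.inv_eq_right_inv sigma2_mul_sigma2,
      Matrix.nonsing_inv_nonsing_inv S hS,
      Matrix.nonsing_inv_nonsing_inv Sᵀ (by rwa [Matrix.det_transpose]), Matrix.mul_assoc]
  rw [Gam, hinvCmat]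
  simp only [Matrix.mul_assoc, Matrix.nonsing_inv_mul_cancel_left S _ hS]
  rw [← Matrix.transpose_mul, Matrix.nonsing_inv_mul S hS, Matrix.transpose_one, Matrix.mul_one]

theorem sum_xiP_mul_xiM_mul_Gam_mul_inv_Cmat (hS : IsUnit S.det) (i : Fin Np) (j : Fin Nm) :
    ∑ α, ∑ β, xiP S i α * xiM S j β * C ((Gam S * (Cmat S)⁻¹) α β)
      = (ψ i * χ j : R2 Np Nm) := by
  have hM : S⁻¹ 0 ⬝ᵥ (Gam S * (Cmat S)⁻¹) *ᵥ S⁻¹ 1 = -Complex.I := by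
    rw [← Matrix.transpose_transpose S⁻¹, ← Matrix.mul_mul_apply, Matrix.transpose_transpose,
      inv_mul_Gam_mul_inv_Cmat_mul_transpose_inv hS]
    simp [sigma3, sigma2, Matrix.mul_apply]
  have hsum : ∑ α, ∑ β, S⁻¹ 0 α * (Complex.I * S⁻¹ 1 β) * (Gam S * (Cmat S)⁻¹) α β = 1 := by
    calc _ = Complex.I * (S⁻¹ 0 ⬝ᵥ (Gam S * (Cmat S)⁻¹) *ᵥ S⁻¹ 1) := by
          simp only [dotProduct, Matrix.mulVec, Finset.mul_sum]
          exact Finset.sum_congr rfl fun α _ => Finset.sum_congr rfl fun β _ => by ring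
      _ = 1 := by rw [hM, mul_neg, Complex.I_mul_I, neg_neg]
  calc ∑ α, ∑ β, xiP S i α * xiM S j β * C ((Gam S * (Cmat S)⁻¹) α β)
      = ∑ α, ∑ β, C (S⁻¹ 0 α * (Complex.I * S⁻¹ 1 β) * (Gam S * (Cmat S)⁻¹) α β)
          * (ψ i * χ j) :=
        Finset.sum_congr rfl fun α _ => Finset.sum_congr rfl fun β _ => by
          simp only [xiP, xiM, map_mul]; ring
    _ = ψ i * χ j := by simp only [← Finset.sum_mul, ← map_sum, hsum, map_one, one_mul]

end Spinors

section Cohomology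

variable {Np Nm : ℕ}

theorem d2_add (ω ω' : Om2 Np Nm) : d2 (ω + ω') = d2 ω + d2 ω' := by
  funext i
  fin_cases i <;> simp [d2] <;> ring

theorem Equiv2.trans {ω ω' ω'' : Om2 Np Nm} (h : Equiv2 ω ω') (h' : Equiv2 ω' ω'') :
    Equiv2 ω ω'' := by
  obtain ⟨ρ, hρ⟩ := h
  obtain ⟨ρ', hρ'⟩ := h'
  exact ⟨ρ + ρ', by rw [d2_add, ← hρ, ← hρ', sub_add_sub_cancel]⟩

theorem ofR_zero : ofR (0 : R2 Np Nm) = 0 := by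
  funext i
  fin_cases i <;> rfl

theorem equiv2_ofR_iff {r r' : R2 Np Nm} :
    Equiv2 (ofR r) (ofR r') ↔ ∃ s t, r - r' = Pp Np Nm * s + Qq Np Nm * t := by
  refine ⟨fun ⟨ρ, hρ⟩ => ⟨ρ 1, ρ 2, by simpa [ofR, d2] using congrFun hρ 0⟩,
    fun ⟨s, t, h⟩ => ⟨![0, s, t, 0], ?_⟩⟩
  funext i
  fin_cases i <;> simp [ofR, d2, h]

theorem d2_eq_zero_iff_exists_equiv2_ofR (hp : 0 < Np) (hm : 0 < Nm) {ω : Om2 Np Nm} :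
    d2 ω = 0 ↔ ∃ r, Equiv2 ω (ofR r) := by
  constructor
  · intro hω
    have h₀ : Pp Np Nm * ω 1 + Qq Np Nm * ω 2 = 0 := congrFun hω 0
    have h₃ : Qq Np Nm * ω 3 = 0 := neg_eq_zero.1 (congrFun hω 1)
    have hQ : Qq Np Nm ≠ 0 := fun h => (ghostSplit_Qq hp hm).1.ne_zero (by rw [h, map_zero])
    obtain ⟨u, hu⟩ := Qq_dvd_of_Pp_mul_add_Qq_mul_eq_zero hp hm h₀
    have hω₂ : ω 2 = -(Pp Np Nm * u) := by
      refine (mul_right_injective₀ hQ) ?_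
      linear_combination h₀ - Pp Np Nm * hu
    have hω₃ : ω 3 = 0 := (mul_eq_zero.1 h₃).resolve_left hQ
    refine ⟨ω 0, ![0, 0, 0, -u], ?_⟩
    funext i
    fin_cases i <;> simp [ofR, d2, hu, hω₂, hω₃]
  · rintro ⟨r, ρ, hρ⟩
    rw [sub_eq_iff_eq_add.1 hρ, d2_add, d2_d2, d2_ofR, zero_add]

theorem ofR_equiv2_zero_iff (hp : 0 < Np) (hm : 0 < Nm) {a b c e : R2 Np Nm}
    (ha : a ∈ coefRing Np Nm hp hm) (hb : b ∈ coefRing Np Nm hp hm)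
    (hc : c ∈ coefRing Np Nm hp hm) (he : e ∈ coefRing Np Nm hp hm) :
    Equiv2 (ofR (a + ψ ⟨0, hp⟩ * b + χ ⟨0, hm⟩ * c + ψ ⟨0, hp⟩ * χ ⟨0, hm⟩ * e)) 0 ↔
      a = 0 ∧ b = 0 ∧ c = 0 ∧ e = 0 := by
  rw [← ofR_zero, equiv2_ofR_iff]
  constructor
  · rintro ⟨s, t, h⟩
    exact eq_zero_of_add_eq_Pp_mul_add_Qq_mul_s3 hp hm ha hb hc he (by rwa [sub_zero] at h)
  · rintro ⟨rfl, rfl, rfl, rfl⟩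
    exact ⟨0, 0, by ring⟩

end Cohomology

/-- for `N₊ ≥ 1`, `N₋ ≥ 1` and any invertible `S` (equivalent spinor
representation), (i) `dω = 0` iff
`ω ∼ a + Σ_α ξ₁₊^α a₊_α + Σ_α ξ₁₋^α a₋_α + (Σ_{α,β} ξ₁₊^α ξ₁₋^β (ΓC⁻¹)_{αβ}) a₊₋`
with coefficients in `ℂ[ψ₂,…,ψ_{N₊}, χ₂,…,χ_{N₋}]`; (ii) such a combination is `∼ 0`
iff `a = a₊₋ = 0`, `Σ_α ξ₁₊^α a₊_α = 0` and `Σ_α ξ₁₋^α a₋_α = 0`. -/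
theorem stmt3 (Np Nm : ℕ) (hp : 0 < Np) (hm : 0 < Nm)
    (S : Matrix (Fin 2) (Fin 2) ℂ) (hS : IsUnit S.det) :
    (∀ ω : Om2 Np Nm, d2 ω = 0 ↔
      ∃ a ∈ coefRing Np Nm hp hm,
      ∃ ap : Fin 2 → R2 Np Nm, (∀ α, ap α ∈ coefRing Np Nm hp hm) ∧
      ∃ am : Fin 2 → R2 Np Nm, (∀ α, am α ∈ coefRing Np Nm hp hm) ∧
      ∃ apm ∈ coefRing Np Nm hp hm,
        Equiv2 ω (ofR (a + (∑ α, xiP S ⟨0, hp⟩ α * ap α)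
          + (∑ α, xiM S ⟨0, hm⟩ α * am α)
          + (∑ α, ∑ β, xiP S ⟨0, hp⟩ α * xiM S ⟨0, hm⟩ β
              * C ((Gam S * (Cmat S)⁻¹) α β)) * apm)))
    ∧
    (∀ (a : R2 Np Nm) (ap am : Fin 2 → R2 Np Nm) (apm : R2 Np Nm),
      a ∈ coefRing Np Nm hp hm → (∀ α, ap α ∈ coefRing Np Nm hp hm) →
      (∀ α, am α ∈ coefRing Np Nm hp hm) → apm ∈ coefRing Np Nm hp hm →
      (Equiv2 (ofR (a + (∑ α, xiP S ⟨0, hp⟩ α * ap α)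
          + (∑ α, xiM S ⟨0, hm⟩ α * am α)
          + (∑ α, ∑ β, xiP S ⟨0, hp⟩ α * xiM S ⟨0, hm⟩ β
              * C ((Gam S * (Cmat S)⁻¹) α β)) * apm)) 0 ↔
        (a = 0 ∧ apm = 0 ∧ (∑ α, xiP S ⟨0, hp⟩ α * ap α) = 0
          ∧ (∑ α, xiM S ⟨0, hm⟩ α * am α) = 0))) := by
  have hξξ := sum_xiP_mul_xiM_mul_Gam_mul_inv_Cmat (Np := Np) hS ⟨0, hp⟩ ⟨0, hm⟩
  refine ⟨fun ω => ⟨fun hω => ?_, ?_⟩, fun a ap am apm ha hap ham hapm => ?_⟩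
  · obtain ⟨r, hωr⟩ := (d2_eq_zero_iff_exists_equiv2_ofR hp hm).1 hω
    obtain ⟨s, t, a, ha, b, hb, c, hc, e, he, rfl⟩ := exists_eq_Pp_mul_add_Qq_mul_add hp hm r
    refine ⟨a, ha, fun α => C (S α 0) * b, fun α => C_mul_mem_coefRing _ hb,
      fun α => C (-Complex.I * S α 1) * c, fun α => C_mul_mem_coefRing _ hc, e, he,
      hωr.trans (equiv2_ofR_iff.2 ⟨s, t, ?_⟩)⟩
    rw [sum_xiP_mul_C_mul hS, sum_xiM_mul_C_mul hS, hξξ]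
    ring
  · rintro ⟨a, -, ap, -, am, -, apm, -, hω⟩
    exact (d2_eq_zero_iff_exists_equiv2_ofR hp hm).2 ⟨_, hω⟩
  · have hmem (z : Fin 2 → ℂ) (f : Fin 2 → R2 Np Nm) (hf : ∀ α, f α ∈ coefRing Np Nm hp hm) :
        ∑ α, C (z α) * f α ∈ coefRing Np Nm hp hm :=
      Subalgebra.sum_mem _ fun α _ => C_mul_mem_coefRing _ (hf α)
    rw [sum_xiP_mul, sum_xiM_mul, hξξ, ofR_equiv2_zero_iff hp hm ha (hmem _ _ hap) (hmem _ _ ham)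
      hapm, mul_eq_zero, mul_eq_zero]
    simp only [ψ_ne_zero, χ_ne_zero, false_or]
    tauto
end
end

section
/- Assume N ≥ 1. Then (i) an element ω ∈ Ω satisfies dω = 0 if and only if ω ∼ a₀₀ + ψ₁a₁₀ + χ₁a₀₁ + ψ₁χ₁a₁₁ for some polynomials a₀₀, a₁₀, a₀₁, a₁₁ lying in the subring ℂ[ψ₂,…,ψ_N, χ₂,…,χ_N] of R (complex constants when N = 1); and (ii) a₀₀ + ψ₁a₁₀ + χ₁a₀₁ + ψ₁χ₁a₁₁ ∼ 0 for such coefficients if and only if a₀₀ = a₁₀ = a₀₁ = a₁₁ = 0. -/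
/-!
D = 2, signature (1,1) supersymmetry algebra cohomology.
`R2 Np Nm = ℂ[ψ₁,…,ψ_{N₊}, χ₁,…,χ_{N₋}]`, `Om2` is the free module with basis
`{1, c̃₁, c̃₂, c̃₁c̃₂}`, and `d2` is the differential with `dc̃₁ = P`, `dc̃₂ = Q`.
-/

open MvPolynomial

noncomputable section

/-- The subring `ℂ[ψ₂,…,ψ_N, χ₂,…,χ_N]` of `R2 N N`. -/
def coefRingN (N : ℕ) (hN : 0 < N) : Subalgebra ℂ (R2 N N) :=
  MvPolynomial.supported ℂ
    {v : Fin N ⊕ Fin N | v ≠ Sum.inl ⟨0, hN⟩ ∧ v ≠ Sum.inr ⟨0, hN⟩}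

section AuxLemmas

open Polynomial in
lemma monic_quad {S : Type*} [CommRing S] (b : S) :
    (Polynomial.X ^ 2 + Polynomial.C b).Monic :=
  monic_X_pow_add (degree_C_le.trans_lt (by decide))

open Polynomial in
lemma degree_quad {S : Type*} [CommRing S] [Nontrivial S] (b : S) :
    (Polynomial.X ^ 2 + Polynomial.C b).degree = 2 := by
  rw [degree_add_eq_left_of_degree_lt, degree_X_pow]
  · rfl
  · rw [degree_X_pow]; exact degree_C_le.trans_lt (by decide)

open Polynomial in
lemma polyB {S : Type*} [CommRing S] [Nontrivial S] (b c d : S) (t : Polynomial S)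
    (h : Polynomial.C c + Polynomial.C d * Polynomial.X
      = (Polynomial.X ^ 2 + Polynomial.C b) * t) :
    c = 0 ∧ d = 0 := by
  set f : Polynomial S := Polynomial.X ^ 2 + Polynomial.C b with hf
  have hm : f.Monic := monic_quad b
  have h1 : (Polynomial.C c + Polynomial.C d * Polynomial.X) %ₘ f
      = Polynomial.C c + Polynomial.C d * Polynomial.X :=
    (modByMonic_eq_self_iff hm).2 (by
      rw [degree_quad]
      have hle : (Polynomial.C c + Polynomial.C d * Polynomial.X).degree ≤ 1 := by
        rw [add_comm]; exact degree_linear_le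
      exact lt_of_le_of_lt hle (by decide))
  have h2 : (Polynomial.C c + Polynomial.C d * Polynomial.X) %ₘ f = 0 := by
    rw [h]
    exact (modByMonic_eq_zero_iff_dvd hm).2 (dvd_mul_right f t)
  have h3 : Polynomial.C c + Polynomial.C d * Polynomial.X = 0 := by rw [← h1, h2]
  constructor
  · have := congrArg (fun p => Polynomial.coeff p 0) h3; simpa using this
  · have := congrArg (fun p => Polynomial.coeff p 1) h3; simpa using this

open Polynomial in
lemma polyA {S : Type*} [CommRing S] [Nontrivial S] (b c d Pc : S) (u v : Polynomial S)
    (h : Polynomial.C c + Polynomial.C d * Polynomial.X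
      = Polynomial.C Pc * u + (Polynomial.X ^ 2 + Polynomial.C b) * v) :
    ∃ w0 w1 : S, c = Pc * w0 ∧ d = Pc * w1 := by
  set f : Polynomial S := Polynomial.X ^ 2 + Polynomial.C b with hf
  have hm : f.Monic := monic_quad b
  have h1 : (Polynomial.C c + Polynomial.C d * Polynomial.X) %ₘ f
      = Polynomial.C c + Polynomial.C d * Polynomial.X :=
    (modByMonic_eq_self_iff hm).2 (by
      rw [degree_quad]
      have hle : (Polynomial.C c + Polynomial.C d * Polynomial.X).degree ≤ 1 := by
        rw [add_comm]; exact degree_linear_le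
      exact lt_of_le_of_lt hle (by decide))
  have h2 : (Polynomial.C Pc * u + f * v) %ₘ f = Pc • (u %ₘ f) := by
    rw [add_modByMonic, (modByMonic_eq_zero_iff_dvd hm).2 (dvd_mul_right f v), add_zero,
      Polynomial.C_mul', smul_modByMonic]
  have h3 : Polynomial.C c + Polynomial.C d * Polynomial.X = Pc • (u %ₘ f) := by
    rw [← h1, h, h2]
  refine ⟨(u %ₘ f).coeff 0, (u %ₘ f).coeff 1, ?_, ?_⟩
  · have := congrArg (fun p => Polynomial.coeff p 0) h3; simpa using this
  · have := congrArg (fun p => Polynomial.coeff p 1) h3; simpa using this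

open Polynomial in
lemma polyDvd {S : Type*} [CommRing S] [IsDomain S] (b Pc : S) (hPc : Pc ≠ 0)
    (x y : Polynomial S)
    (h : Polynomial.C Pc * x + (Polynomial.X ^ 2 + Polynomial.C b) * y = 0) :
    (Polynomial.X ^ 2 + Polynomial.C b) ∣ x := by
  set f : Polynomial S := Polynomial.X ^ 2 + Polynomial.C b with hf
  have hm : f.Monic := monic_quad b
  have h1 : (Polynomial.C Pc * x) %ₘ f = 0 := by
    have hx : Polynomial.C Pc * x = f * (-y) := by linear_combination h
    rw [hx]
    exact (modByMonic_eq_zero_iff_dvd hm).2 (dvd_mul_right f (-y))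
  rw [Polynomial.C_mul', smul_modByMonic, Polynomial.smul_eq_C_mul] at h1
  have h2 : x %ₘ f = 0 := by
    rcases mul_eq_zero.1 h1 with h' | h'
    · exact absurd (Polynomial.C_eq_zero.1 h') hPc
    · exact h'
  exact (modByMonic_eq_zero_iff_dvd hm).1 h2

end AuxLemmas

section SubstMachinery

variable {N : ℕ}

/-- Substitute the variable `s` by `Polynomial.X`, all other variables by constants. -/
def sub' (s : Fin N ⊕ Fin N) : R2 N N →ₐ[ℂ] Polynomial (R2 N N) :=
  MvPolynomial.aeval (fun v => if v = s then Polynomial.X else Polynomial.C (MvPolynomial.X v))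

lemma sub'_X (s v) : sub' s (X v : R2 N N)
    = if v = s then Polynomial.X else Polynomial.C (MvPolynomial.X v) := by
  simp [sub']

lemma sub'_C_of_supported {s : Fin N ⊕ Fin N} {p : R2 N N}
    (hp : p ∈ supported ℂ {v | v ≠ s}) : sub' s p = Polynomial.C p := by
  have hle : supported ℂ {v : Fin N ⊕ Fin N | v ≠ s} ≤
      AlgHom.equalizer (sub' s) (Polynomial.CAlgHom (R := ℂ)) := by
    rw [supported_eq_adjoin_X]
    apply Algebra.adjoin_le
    rintro _ ⟨v, hv, rfl⟩
    show sub' s (X v) = _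
    rw [sub'_X, if_neg hv]
    rfl
  exact hle hp

lemma eval_sub' (s : Fin N ⊕ Fin N) (p : R2 N N) :
    Polynomial.aeval (MvPolynomial.X s : R2 N N) (sub' s p) = p := by
  have key : ((Polynomial.aeval (MvPolynomial.X s : R2 N N)).restrictScalars ℂ).comp (sub' s)
      = AlgHom.id ℂ (R2 N N) := by
    apply MvPolynomial.algHom_ext
    intro v
    by_cases h : v = s <;> simp [sub', h]
  exact DFunLike.congr_fun key p

end SubstMachinery

section MainLemmas

variable {N : ℕ}

/-- `A = Σ_{i ≠ 0} ψᵢ²`, so that `P = ψ₀² + A`. -/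
def AA (N : ℕ) (hN : 0 < N) : R2 N N :=
  ∑ i ∈ Finset.univ.erase (⟨0, hN⟩ : Fin N), ψ i ^ 2

/-- `B = Σ_{i ≠ 0} χᵢ²`, so that `Q = χ₀² + B`. -/
def BB (N : ℕ) (hN : 0 < N) : R2 N N :=
  ∑ i ∈ Finset.univ.erase (⟨0, hN⟩ : Fin N), χ i ^ 2

lemma hPA (hN : 0 < N) : Pp N N = ψ ⟨0, hN⟩ ^ 2 + AA N hN := by
  rw [Pp, AA]
  exact (Finset.add_sum_erase _ _ (Finset.mem_univ _)).symm

lemma hQB (hN : 0 < N) : Qq N N = χ ⟨0, hN⟩ ^ 2 + BB N hN := by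
  rw [Qq, BB]
  exact (Finset.add_sum_erase _ _ (Finset.mem_univ _)).symm

lemma X_mem_coef (hN : 0 < N) {v : Fin N ⊕ Fin N} (h1 : v ≠ Sum.inl ⟨0, hN⟩)
    (h2 : v ≠ Sum.inr ⟨0, hN⟩) : (X v : R2 N N) ∈ coefRingN N hN := by
  rw [coefRingN]
  exact X_mem_supported.2 ⟨h1, h2⟩

lemma AA_mem (hN : 0 < N) : AA N hN ∈ coefRingN N hN := by
  rw [AA]
  refine Subalgebra.sum_mem _ fun i hi => ?_
  have hne : i ≠ ⟨0, hN⟩ := (Finset.mem_erase.1 hi).1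
  show (X (Sum.inl i) : R2 N N) ^ 2 ∈ _
  exact pow_mem (X_mem_coef hN (fun hc => hne (Sum.inl.inj hc)) (by simp)) 2

lemma BB_mem (hN : 0 < N) : BB N hN ∈ coefRingN N hN := by
  rw [BB]
  refine Subalgebra.sum_mem _ fun i hi => ?_
  have hne : i ≠ ⟨0, hN⟩ := (Finset.mem_erase.1 hi).1
  show (X (Sum.inr i) : R2 N N) ^ 2 ∈ _
  exact pow_mem (X_mem_coef hN (by simp) (fun hc => hne (Sum.inr.inj hc))) 2

lemma coef_le_inr (hN : 0 < N) :
    coefRingN N hN ≤ supported ℂ {v : Fin N ⊕ Fin N | v ≠ Sum.inr ⟨0, hN⟩} := by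
  rw [coefRingN]
  exact supported_mono fun v hv => hv.2

lemma coef_le_inl (hN : 0 < N) :
    coefRingN N hN ≤ supported ℂ {v : Fin N ⊕ Fin N | v ≠ Sum.inl ⟨0, hN⟩} := by
  rw [coefRingN]
  exact supported_mono fun v hv => hv.1

lemma Pp_supp (hN : 0 < N) :
    Pp N N ∈ supported ℂ {v : Fin N ⊕ Fin N | v ≠ Sum.inr ⟨0, hN⟩} := by
  rw [Pp]
  refine Subalgebra.sum_mem _ fun i _ => ?_
  show (X (Sum.inl i) : R2 N N) ^ 2 ∈ _
  exact pow_mem (X_mem_supported.2 (by simp)) 2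

lemma Qq_supp (hN : 0 < N) :
    Qq N N ∈ supported ℂ {v : Fin N ⊕ Fin N | v ≠ Sum.inl ⟨0, hN⟩} := by
  rw [Qq]
  refine Subalgebra.sum_mem _ fun i _ => ?_
  show (X (Sum.inr i) : R2 N N) ^ 2 ∈ _
  exact pow_mem (X_mem_supported.2 (by simp)) 2

lemma subχ_Q (hN : 0 < N) : sub' (Sum.inr (⟨0, hN⟩ : Fin N)) (Qq N N)
    = Polynomial.X ^ 2 + Polynomial.C (BB N hN) := by
  rw [hQB hN, map_add, map_pow,
    show (χ (⟨0, hN⟩ : Fin N) : R2 N N) = X (Sum.inr ⟨0, hN⟩) from rfl,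
    sub'_X, if_pos rfl, sub'_C_of_supported (coef_le_inr hN (BB_mem hN))]

lemma subψ_P (hN : 0 < N) : sub' (Sum.inl (⟨0, hN⟩ : Fin N)) (Pp N N)
    = Polynomial.X ^ 2 + Polynomial.C (AA N hN) := by
  rw [hPA hN, map_add, map_pow,
    show (ψ (⟨0, hN⟩ : Fin N) : R2 N N) = X (Sum.inl ⟨0, hN⟩) from rfl,
    sub'_X, if_pos rfl, sub'_C_of_supported (coef_le_inl hN (AA_mem hN))]

lemma subχ_P (hN : 0 < N) :
    sub' (Sum.inr (⟨0, hN⟩ : Fin N)) (Pp N N) = Polynomial.C (Pp N N) :=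
  sub'_C_of_supported (Pp_supp hN)

lemma subχ_ψ0 (hN : 0 < N) : sub' (Sum.inr (⟨0, hN⟩ : Fin N)) (ψ ⟨0, hN⟩)
    = Polynomial.C (ψ ⟨0, hN⟩) := by
  rw [show (ψ (⟨0, hN⟩ : Fin N) : R2 N N) = X (Sum.inl ⟨0, hN⟩) from rfl, sub'_X,
    if_neg (by simp)]

lemma subχ_χ0 (hN : 0 < N) : sub' (Sum.inr (⟨0, hN⟩ : Fin N)) (χ ⟨0, hN⟩)
    = Polynomial.X := by
  rw [show (χ (⟨0, hN⟩ : Fin N) : R2 N N) = X (Sum.inr ⟨0, hN⟩) from rfl, sub'_X, if_pos rfl]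

lemma subψ_ψ0 (hN : 0 < N) : sub' (Sum.inl (⟨0, hN⟩ : Fin N)) (ψ ⟨0, hN⟩)
    = Polynomial.X := by
  rw [show (ψ (⟨0, hN⟩ : Fin N) : R2 N N) = X (Sum.inl ⟨0, hN⟩) from rfl, sub'_X, if_pos rfl]

lemma Pp_ne (hN : 0 < N) : Pp N N ≠ 0 := by
  intro h
  have h2 := congrArg (MvPolynomial.eval (fun _ => (1 : ℂ))) h
  simp only [Pp, ψ, map_sum, map_pow, eval_X, one_pow, Finset.sum_const, Finset.card_univ,
    Fintype.card_fin, nsmul_eq_mul, mul_one, map_zero] at h2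
  exact hN.ne' (Nat.cast_eq_zero.1 h2)

lemma Qq_ne (hN : 0 < N) : Qq N N ≠ 0 := by
  intro h
  have h2 := congrArg (MvPolynomial.eval (fun _ => (1 : ℂ))) h
  simp only [Qq, χ, map_sum, map_pow, eval_X, one_pow, Finset.sum_const, Finset.card_univ,
    Fintype.card_fin, nsmul_eq_mul, mul_one, map_zero] at h2
  exact hN.ne' (Nat.cast_eq_zero.1 h2)

lemma Q_dvd (hN : 0 < N) (x : R2 N N)
    (h : (Polynomial.X ^ 2 + Polynomial.C (BB N hN)) ∣ sub' (Sum.inr (⟨0, hN⟩ : Fin N)) x) :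
    Qq N N ∣ x := by
  obtain ⟨q, hq⟩ := h
  refine ⟨Polynomial.aeval (X (Sum.inr ⟨0, hN⟩) : R2 N N) q, ?_⟩
  have h2 := congrArg (Polynomial.aeval (X (Sum.inr ⟨0, hN⟩) : R2 N N)) hq
  rw [eval_sub'] at h2
  rw [h2, map_mul, map_add, map_pow, Polynomial.aeval_X, Polynomial.aeval_C]
  have hc : (X (Sum.inr ⟨0, hN⟩) : R2 N N) ^ 2
      + algebraMap (R2 N N) (R2 N N) (BB N hN) = Qq N N := by
    rw [hQB hN]; rfl
  rw [hc]

lemma syzygy (hN : 0 < N) (ω₁ ω₂ : R2 N N) (h : Pp N N * ω₁ + Qq N N * ω₂ = 0) :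
    ∃ ρ, ω₁ = -(Qq N N * ρ) ∧ ω₂ = Pp N N * ρ := by
  have H := congrArg (sub' (Sum.inr (⟨0, hN⟩ : Fin N))) h
  rw [map_add, map_mul, map_mul, map_zero, subχ_P hN, subχ_Q hN] at H
  have hdvd := polyDvd (BB N hN) (Pp N N) (Pp_ne hN) _ _ H
  obtain ⟨w, hw⟩ := Q_dvd hN ω₁ hdvd
  refine ⟨-w, by rw [hw]; ring, ?_⟩
  have h2 : Qq N N * (Pp N N * w + ω₂) = 0 := by
    rw [hw] at h; linear_combination h
  rcases mul_eq_zero.1 h2 with h3 | h3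
  · exact absurd h3 (Qq_ne hN)
  · linear_combination h3

lemma reduce1 (hN : 0 < N) (a b t : R2 N N) (ha : a ∈ coefRingN N hN)
    (hb : b ∈ coefRingN N hN) (h : a + ψ ⟨0, hN⟩ * b = Pp N N * t) : a = 0 ∧ b = 0 := by
  have H := congrArg (sub' (Sum.inl (⟨0, hN⟩ : Fin N))) h
  rw [map_add, map_mul, map_mul, subψ_P hN, subψ_ψ0 hN,
    sub'_C_of_supported (coef_le_inl hN ha), sub'_C_of_supported (coef_le_inl hN hb)] at H
  exact polyB (AA N hN) a b (sub' (Sum.inl (⟨0, hN⟩ : Fin N)) t) (by linear_combination H)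

lemma uniq (hN : 0 < N) (a00 a10 a01 a11 u v : R2 N N)
    (m00 : a00 ∈ coefRingN N hN) (m10 : a10 ∈ coefRingN N hN)
    (m01 : a01 ∈ coefRingN N hN) (m11 : a11 ∈ coefRingN N hN)
    (h : a00 + ψ ⟨0, hN⟩ * a10 + χ ⟨0, hN⟩ * a01 + ψ ⟨0, hN⟩ * χ ⟨0, hN⟩ * a11
      = Pp N N * u + Qq N N * v) :
    a00 = 0 ∧ a10 = 0 ∧ a01 = 0 ∧ a11 = 0 := by
  have H := congrArg (sub' (Sum.inr (⟨0, hN⟩ : Fin N))) h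
  simp only [map_add, map_mul, subχ_P hN, subχ_Q hN, subχ_ψ0 hN, subχ_χ0 hN,
    sub'_C_of_supported (coef_le_inr hN m00), sub'_C_of_supported (coef_le_inr hN m10),
    sub'_C_of_supported (coef_le_inr hN m01), sub'_C_of_supported (coef_le_inr hN m11)] at H
  obtain ⟨w0, w1, h0, h1⟩ := polyA (BB N hN) (a00 + ψ ⟨0, hN⟩ * a10)
    (a01 + ψ ⟨0, hN⟩ * a11) (Pp N N) (sub' _ u) (sub' _ v) (by
      rw [Polynomial.C_add, Polynomial.C_add, Polynomial.C_mul, Polynomial.C_mul]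
      linear_combination H)
  obtain ⟨e00, e10⟩ := reduce1 hN a00 a10 w0 m00 m10 h0
  obtain ⟨e01, e11⟩ := reduce1 hN a01 a11 w1 m01 m11 h1
  exact ⟨e00, e10, e01, e11⟩

lemma exists_nf (hN : 0 < N) (r : R2 N N) :
    ∃ a00 a10 a01 a11 u v : R2 N N,
      a00 ∈ coefRingN N hN ∧ a10 ∈ coefRingN N hN ∧ a01 ∈ coefRingN N hN ∧
      a11 ∈ coefRingN N hN ∧
      r = a00 + ψ ⟨0, hN⟩ * a10 + χ ⟨0, hN⟩ * a01 + ψ ⟨0, hN⟩ * χ ⟨0, hN⟩ * a11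
        + (Pp N N * u + Qq N N * v) := by
  induction r using MvPolynomial.induction_on with
  | C a =>
      refine ⟨C a, 0, 0, 0, 0, 0, ?_, zero_mem _, zero_mem _, zero_mem _, by ring⟩
      rw [show (C a : R2 N N) = algebraMap ℂ (R2 N N) a from rfl]
      exact Subalgebra.algebraMap_mem _ a
  | add p q hp hq =>
      obtain ⟨a00, a10, a01, a11, u, v, m00, m10, m01, m11, hpe⟩ := hp
      obtain ⟨b00, b10, b01, b11, u', v', n00, n10, n01, n11, hqe⟩ := hq
      exact ⟨a00 + b00, a10 + b10, a01 + b01, a11 + b11, u + u', v + v',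
        add_mem m00 n00, add_mem m10 n10, add_mem m01 n01, add_mem m11 n11,
        by rw [hpe, hqe]; ring⟩
  | mul_X p n ih =>
      obtain ⟨a00, a10, a01, a11, u, v, m00, m10, m01, m11, hpe⟩ := ih
      by_cases h1 : n = Sum.inl ⟨0, hN⟩
      · subst h1
        refine ⟨-(AA N hN * a10), a00, -(AA N hN * a11), a01,
          ψ ⟨0, hN⟩ * u + a10 + χ ⟨0, hN⟩ * a11, ψ ⟨0, hN⟩ * v,
          neg_mem (mul_mem (AA_mem hN) m10), m00,
          neg_mem (mul_mem (AA_mem hN) m11), m01, ?_⟩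
        rw [show (X (Sum.inl (⟨0, hN⟩ : Fin N)) : R2 N N) = ψ ⟨0, hN⟩ from rfl, hpe,
          hPA hN]
        ring
      · by_cases h2 : n = Sum.inr ⟨0, hN⟩
        · subst h2
          refine ⟨-(BB N hN * a01), -(BB N hN * a11), a00, a10,
            χ ⟨0, hN⟩ * u, χ ⟨0, hN⟩ * v + a01 + ψ ⟨0, hN⟩ * a11,
            neg_mem (mul_mem (BB_mem hN) m01), neg_mem (mul_mem (BB_mem hN) m11),
            m00, m10, ?_⟩
          rw [show (X (Sum.inr (⟨0, hN⟩ : Fin N)) : R2 N N) = χ ⟨0, hN⟩ from rfl, hpe,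
            hQB hN]
          ring
        · exact ⟨a00 * X n, a10 * X n, a01 * X n, a11 * X n, u * X n, v * X n,
            mul_mem m00 (X_mem_coef hN h1 h2), mul_mem m10 (X_mem_coef hN h1 h2),
            mul_mem m01 (X_mem_coef hN h1 h2), mul_mem m11 (X_mem_coef hN h1 h2),
            by rw [hpe]; ring⟩

end MainLemmas

/-- for `N ≥ 1` (D = 2, Euclidean signatures (0,2)/(2,0) with
`N` Majorana ghosts `ξᵢ = (ψᵢ, χᵢ)`), (i) `dω = 0` iff
`ω ∼ a₀₀ + ψ₁a₁₀ + χ₁a₀₁ + ψ₁χ₁a₁₁` with coefficients in `ℂ[ψ₂,…,ψ_N, χ₂,…,χ_N]`;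
(ii) such a combination is `∼ 0` iff all coefficients vanish. -/
theorem stmt4 (N : ℕ) (hN : 0 < N) :
    (∀ ω : Om2 N N, d2 ω = 0 ↔
      ∃ a00 ∈ coefRingN N hN, ∃ a10 ∈ coefRingN N hN,
      ∃ a01 ∈ coefRingN N hN, ∃ a11 ∈ coefRingN N hN,
        Equiv2 ω (ofR (a00 + ψ ⟨0, hN⟩ * a10 + χ ⟨0, hN⟩ * a01
          + ψ ⟨0, hN⟩ * χ ⟨0, hN⟩ * a11)))
    ∧
    (∀ a00 a10 a01 a11 : R2 N N,
      a00 ∈ coefRingN N hN → a10 ∈ coefRingN N hN →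
      a01 ∈ coefRingN N hN → a11 ∈ coefRingN N hN →
      (Equiv2 (ofR (a00 + ψ ⟨0, hN⟩ * a10 + χ ⟨0, hN⟩ * a01
          + ψ ⟨0, hN⟩ * χ ⟨0, hN⟩ * a11)) 0 ↔
        a00 = 0 ∧ a10 = 0 ∧ a01 = 0 ∧ a11 = 0)) := by
  constructor
  · intro ω
    constructor
    · intro h
      have h2 : Pp N N * ω 3 = 0 := congrFun h 2
      have hω3 : ω 3 = 0 := by
        rcases mul_eq_zero.1 h2 with h' | h'
        · exact absurd h' (Pp_ne hN)
        · exact h'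
      have h0 : Pp N N * ω 1 + Qq N N * ω 2 = 0 := congrFun h 0
      obtain ⟨ρ3, hρ1, hρ2⟩ := syzygy hN _ _ h0
      obtain ⟨a00, a10, a01, a11, u, v, m00, m10, m01, m11, hnf⟩ := exists_nf hN (ω 0)
      refine ⟨a00, m00, a10, m10, a01, m01, a11, m11, ![0, u, v, ρ3], ?_⟩
      funext i
      fin_cases i
      · show ω 0 - (a00 + ψ ⟨0, hN⟩ * a10 + χ ⟨0, hN⟩ * a01
            + ψ ⟨0, hN⟩ * χ ⟨0, hN⟩ * a11) = Pp N N * u + Qq N N * v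
        rw [hnf]; ring
      · show ω 1 - 0 = -(Qq N N * ρ3)
        rw [sub_zero]; exact hρ1
      · show ω 2 - 0 = Pp N N * ρ3
        rw [sub_zero]; exact hρ2
      · show ω 3 - 0 = 0
        rw [sub_zero]; exact hω3
    · rintro ⟨a00, m00, a10, m10, a01, m01, a11, m11, ρ, hρ⟩
      have e1 : ω 1 - 0 = -(Qq N N * ρ 3) := congrFun hρ 1
      have e2 : ω 2 - 0 = Pp N N * ρ 3 := congrFun hρ 2
      have e3 : ω 3 - 0 = (0 : R2 N N) := congrFun hρ 3
      rw [sub_zero] at e1 e2 e3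
      funext i
      fin_cases i
      · show Pp N N * ω 1 + Qq N N * ω 2 = 0
        rw [e1, e2]; ring
      · show -(Qq N N * ω 3) = 0
        rw [e3]; ring
      · show Pp N N * ω 3 = 0
        rw [e3]; ring
      · rfl
  · intro a00 a10 a01 a11 m00 m10 m01 m11
    constructor
    · rintro ⟨ρ, hρ⟩
      have e0 : (a00 + ψ ⟨0, hN⟩ * a10 + χ ⟨0, hN⟩ * a01
          + ψ ⟨0, hN⟩ * χ ⟨0, hN⟩ * a11) - 0 = Pp N N * ρ 1 + Qq N N * ρ 2 :=
        congrFun hρ 0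
      rw [sub_zero] at e0
      exact uniq hN a00 a10 a01 a11 (ρ 1) (ρ 2) m00 m10 m01 m11 e0
    · rintro ⟨rfl, rfl, rfl, rfl⟩
      refine ⟨0, ?_⟩
      funext i
      fin_cases i
      · show ((0 : R2 N N) + ψ ⟨0, hN⟩ * 0 + χ ⟨0, hN⟩ * 0
            + ψ ⟨0, hN⟩ * χ ⟨0, hN⟩ * 0) - 0 = Pp N N * 0 + Qq N N * 0
        ring
      · show (0 : R2 N N) - 0 = -(Qq N N * 0)
        ring
      · show (0 : R2 N N) - 0 = Pp N N * 0
        ring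
      · show (0 : R2 N N) - 0 = 0
        ring
end
end
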